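/- arXiv:2109.01499 — 4 statements merged into one kernel-verified Lean document; each statement's English description precedes it below -/
import Mathlib

section
/- Minor summation formula for Pfaffians: let K be a field of characteristic zero, let n be a positive even integer, let N ≥ n be an integer, let B be an n×N matrix over K, and let A be an N×N skew-symmetric matrix over K. Then Σ_{I ⊆ {1,…,N}, |I| = n} det(B_I) · Pf(A_I) = Pf(B·A·Bᵀ), where for an n-element subset I, B_I is the n×n submatrix of B formed by the columns indexed by I taken in increasing order, and A_I is the n×n submatrix of A whose rows and columns are indexed by I taken in increasing order. -/
open Matrix

/-- The Pfaffian of an `n × n` matrix (intended for even `n`), defined by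
`Pf(A) = (1/(2^m · m!)) · Σ_{σ ∈ S_{2m}} sgn(σ) · ∏_{i=1}^m A_{σ(2i−1), σ(2i)}` where `m = n/2`. -/
noncomputable def pfaffian {K : Type*} [Field K] {n : ℕ} (A : Matrix (Fin n) (Fin n) K) : K :=
  ((2 : K) ^ (n / 2) * (Nat.factorial (n / 2) : K))⁻¹ *
    ∑ σ : Equiv.Perm (Fin n), ((Equiv.Perm.sign σ : ℤ) : K) *
      ∏ i : Fin (n / 2),
        A (σ ⟨2 * i.val, by have := i.isLt; omega⟩) (σ ⟨2 * i.val + 1, by have := i.isLt; omega⟩)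

namespace PfMSF

/-- Pack a function `Fin m → α × α` into a function `Fin n → α` (for `n = 2m`),
even indices getting first components. -/
def pack {α : Type*} {n m : ℕ} (hm : n = 2 * m) (φ : Fin m → α × α) : Fin n → α := fun j =>
  if j.val % 2 = 0 then (φ ⟨j.val / 2, by have := j.2; omega⟩).1
  else (φ ⟨j.val / 2, by have := j.2; omega⟩).2

def unpack {α : Type*} {n m : ℕ} (hm : n = 2 * m) (g : Fin n → α) : Fin m → α × α := fun i =>
  (g ⟨2 * i.val, by have := i.2; omega⟩, g ⟨2 * i.val + 1, by have := i.2; omega⟩)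

lemma pack_even {α : Type*} {n m : ℕ} (hm : n = 2 * m) (φ : Fin m → α × α) {j : Fin n}
    {i : Fin m} (h : j.val = 2 * i.val) : pack hm φ j = (φ i).1 := by
  have hj := j.2
  unfold pack
  rw [if_pos (by omega)]
  exact congrArg (fun x => (φ x).1)
    (Fin.ext (a := ⟨j.val / 2, by omega⟩) (b := i) (by simpa using by omega))

lemma pack_odd {α : Type*} {n m : ℕ} (hm : n = 2 * m) (φ : Fin m → α × α) {j : Fin n}
    {i : Fin m} (h : j.val = 2 * i.val + 1) : pack hm φ j = (φ i).2 := by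
  have hj := j.2
  unfold pack
  rw [if_neg (by omega)]
  exact congrArg (fun x => (φ x).2)
    (Fin.ext (a := ⟨j.val / 2, by omega⟩) (b := i) (by simpa using by omega))

lemma pack_unpack {α : Type*} {n m : ℕ} (hm : n = 2 * m) (g : Fin n → α) :
    pack hm (unpack hm g) = g := by
  funext j
  have hj := j.2
  by_cases h : j.val % 2 = 0
  · rw [pack_even hm (unpack hm g) (i := ⟨j.val / 2, by omega⟩) (by simp; omega)]
    exact congrArg g (Fin.ext (by simpa using by omega))
  · rw [pack_odd hm (unpack hm g) (i := ⟨j.val / 2, by omega⟩) (by simp; omega)]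
    exact congrArg g (Fin.ext (by simpa using by omega))

lemma unpack_pack {α : Type*} {n m : ℕ} (hm : n = 2 * m) (φ : Fin m → α × α) :
    unpack hm (pack hm φ) = φ := by
  funext i
  have hi := i.2
  unfold unpack
  rw [pack_even hm φ (i := i) (by simp), pack_odd hm φ (i := i) (by simp)]

/-- Functions `Fin m → α × α` are equivalent to functions `Fin (2m) → α`. -/
def pairFunEquiv {α : Type*} {n m : ℕ} (hm : n = 2 * m) : (Fin m → α × α) ≃ (Fin n → α) :=
  ⟨pack hm, unpack hm, unpack_pack hm, pack_unpack hm⟩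

/-- Even/odd equivalence `Fin m × Fin 2 ≃ Fin (2m)`. -/
def eoEquiv (m : ℕ) : Fin m × Fin 2 ≃ Fin (2 * m) where
  toFun p := ⟨2 * p.1.val + p.2.val, by have := p.1.2; have := p.2.2; omega⟩
  invFun j := (⟨j.val / 2, by have := j.2; omega⟩, ⟨j.val % 2, by omega⟩)
  left_inv p := by
    have h1 := p.1.2
    have h2 := p.2.2
    ext
    · simp; omega
    · simp; omega
  right_inv j := by
    have := j.2
    ext
    simp
    omega

/-- Splitting a product over `Fin n` (with `n = 2m`) into even/odd pairs. -/
lemma prod_split {M : Type*} [CommMonoid M] {n m : ℕ} (hm : n = 2 * m) (h : Fin n → M) :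
    ∏ j, h j = ∏ i : Fin m, (h ⟨2 * i.val, by have := i.2; omega⟩ *
      h ⟨2 * i.val + 1, by have := i.2; omega⟩) := by
  subst hm
  rw [← Equiv.prod_comp (eoEquiv m) h, Fintype.prod_prod_type]
  refine Finset.prod_congr rfl fun i _ => ?_
  rw [Fin.prod_univ_two]
  rfl

/-- The summand: `det(B∘g) · ∏ A_{g(2i),g(2i+1)}`. -/
def Fterm {K : Type*} [Field K] {n N m : ℕ} (hm : n = 2 * m) (B : Matrix (Fin n) (Fin N) K)
    (A : Matrix (Fin N) (Fin N) K) (g : Fin n → Fin N) : K :=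
  (B.submatrix id g).det *
    ∏ i : Fin m, A (g ⟨2 * i.val, by have := i.2; omega⟩) (g ⟨2 * i.val + 1, by have := i.2; omega⟩)

lemma image_comp_perm {N n : ℕ} (I : Finset (Fin N)) (hI : I.card = n) (τ : Equiv.Perm (Fin n)) :
    Finset.image (fun x => I.orderEmbOfFin hI (τ x)) Finset.univ = I := by
  ext x
  simp only [Finset.mem_image, Finset.mem_univ, true_and]
  constructor
  · rintro ⟨y, rfl⟩
    exact Finset.orderEmbOfFin_mem I hI (τ y)
  · intro hx
    obtain ⟨z, hz⟩ : ∃ z, I.orderEmbOfFin hI z = x := by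
      have h := Finset.range_orderEmbOfFin I hI
      rw [Set.ext_iff] at h
      exact (h x).2 (Finset.mem_coe.mpr hx)
    exact ⟨τ.symm z, by simp [hz]⟩

lemma exists_factor {N n : ℕ} {g : Fin n → Fin N} (hg : Function.Injective g)
    (hI : (Finset.univ.image g).card = n) :
    ∃ τ : Equiv.Perm (Fin n), ∀ x, (Finset.univ.image g).orderEmbOfFin hI (τ x) = g x := by
  set I := Finset.univ.image g with hIdef
  have hmem : ∀ x, g x ∈ I := fun x => Finset.mem_image_of_mem g (Finset.mem_univ x)
  set u : Fin n → Fin n := fun x => (I.orderIsoOfFin hI).symm ⟨g x, hmem x⟩ with hu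
  have hinj : Function.Injective u := by
    intro a b hab
    have h1 := congrArg (I.orderIsoOfFin hI) hab
    simp only [OrderIso.apply_symm_apply, u] at h1
    exact hg (congrArg Subtype.val h1)
  refine ⟨Equiv.ofBijective u (Finite.injective_iff_bijective.mp hinj), fun x => ?_⟩
  show I.orderEmbOfFin hI (u x) = g x
  rw [← Finset.coe_orderIsoOfFin_apply]
  simp [u]

variable {K : Type*} [Field K] {n N m : ℕ}

lemma step1 (hm : n = 2 * m) (B : Matrix (Fin n) (Fin N) K) (A : Matrix (Fin N) (Fin N) K)
    (I : Finset (Fin N)) (hI : I.card = n) :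
    ∑ τ : Equiv.Perm (Fin n), Fterm hm B A (fun x => I.orderEmbOfFin hI (τ x)) =
    (B.submatrix id fun i => I.orderEmbOfFin hI i).det *
      ∑ τ : Equiv.Perm (Fin n), ((Equiv.Perm.sign τ : ℤ) : K) *
        ∏ i : Fin m,
          A.submatrix (fun i => I.orderEmbOfFin hI i) (fun i => I.orderEmbOfFin hI i)
            (τ ⟨2 * i.val, by have := i.2; omega⟩) (τ ⟨2 * i.val + 1, by have := i.2; omega⟩) := by
  rw [Finset.mul_sum]
  refine Finset.sum_congr rfl fun τ _ => ?_
  have h1 : B.submatrix id (fun x => I.orderEmbOfFin hI (τ x)) =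
      (B.submatrix id fun i => I.orderEmbOfFin hI i).submatrix id τ := rfl
  simp only [Fterm, Matrix.submatrix_apply, h1, Matrix.det_permute']
  ring

lemma step2 (hm : n = 2 * m) (B : Matrix (Fin n) (Fin N) K) (A : Matrix (Fin N) (Fin N) K) :
    ∑ p : {I : Finset (Fin N) // I.card = n} × Equiv.Perm (Fin n),
      Fterm hm B A (fun x => p.1.1.orderEmbOfFin p.1.2 (p.2 x)) =
    ∑ g ∈ Finset.univ.filter (fun g : Fin n → Fin N => Function.Injective g),
      Fterm hm B A g := by
  classical
  refine Finset.sum_bij (fun p _ => fun x => p.1.1.orderEmbOfFin p.1.2 (p.2 x)) ?_ ?_ ?_ ?_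
  · rintro ⟨⟨I, hI⟩, τ⟩ _
    simp only [Finset.mem_filter, Finset.mem_univ, true_and]
    exact (I.orderEmbOfFin hI).injective.comp τ.injective
  · rintro ⟨⟨I, hI⟩, τ⟩ _ ⟨⟨J, hJ⟩, ρ⟩ _ heq
    have heq2 : (fun x => I.orderEmbOfFin hI (τ x)) = (fun x => J.orderEmbOfFin hJ (ρ x)) := heq
    have hIJ : I = J := by
      rw [← image_comp_perm I hI τ, ← image_comp_perm J hJ ρ, heq2]
    subst hIJ
    have hτρ : τ = ρ :=
      Equiv.ext fun x => (I.orderEmbOfFin hI).injective (congrFun heq2 x)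
    simp [hτρ]
  · intro g hg
    simp only [Finset.mem_filter, Finset.mem_univ, true_and] at hg
    have hI : (Finset.univ.image g).card = n := by
      rw [Finset.card_image_of_injective _ hg, Finset.card_univ, Fintype.card_fin]
    obtain ⟨τ, hτ⟩ := exists_factor hg hI
    exact ⟨⟨⟨Finset.univ.image g, hI⟩, τ⟩, Finset.mem_univ _, funext hτ⟩
  · intro p _
    rfl

lemma step3 (hm : n = 2 * m) (B : Matrix (Fin n) (Fin N) K) (A : Matrix (Fin N) (Fin N) K) :
    ∑ g ∈ Finset.univ.filter (fun g : Fin n → Fin N => Function.Injective g),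
      Fterm hm B A g = ∑ g : Fin n → Fin N, Fterm hm B A g := by
  classical
  refine Finset.sum_filter_of_ne fun g _ hne => ?_
  by_contra hg
  apply hne
  rw [Function.not_injective_iff] at hg
  obtain ⟨x, y, hxy, hne'⟩ := hg
  unfold Fterm
  rw [Matrix.det_zero_of_column_eq hne' (fun k => by simp [hxy]), zero_mul]

lemma step4 (hm : n = 2 * m) (B : Matrix (Fin n) (Fin N) K) (A : Matrix (Fin N) (Fin N) K) :
    ∑ σ : Equiv.Perm (Fin n), ((Equiv.Perm.sign σ : ℤ) : K) *
        ∏ i : Fin m, (B * A * Bᵀ) (σ ⟨2 * i.val, by have := i.2; omega⟩)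
          (σ ⟨2 * i.val + 1, by have := i.2; omega⟩) =
      ∑ g : Fin n → Fin N, Fterm hm B A g := by
  have entry : ∀ a b, (B * A * Bᵀ) a b =
      ∑ p : Fin N × Fin N, B a p.1 * A p.1 p.2 * B b p.2 := by
    intro a b
    rw [Fintype.sum_prod_type]
    simp only [Matrix.mul_apply, Matrix.transpose_apply, Finset.sum_mul]
    rw [Finset.sum_comm]
  calc ∑ σ : Equiv.Perm (Fin n), ((Equiv.Perm.sign σ : ℤ) : K) *
        ∏ i : Fin m, (B * A * Bᵀ) (σ ⟨2 * i.val, by have := i.2; omega⟩)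
          (σ ⟨2 * i.val + 1, by have := i.2; omega⟩)
      = ∑ σ : Equiv.Perm (Fin n), ((Equiv.Perm.sign σ : ℤ) : K) *
          ∑ φ : Fin m → Fin N × Fin N, ∏ i : Fin m,
            (B (σ ⟨2 * i.val, by have := i.2; omega⟩) (φ i).1 * A (φ i).1 (φ i).2 *
              B (σ ⟨2 * i.val + 1, by have := i.2; omega⟩) (φ i).2) := by
        refine Finset.sum_congr rfl fun σ _ => ?_
        congr 1
        simp_rw [entry]
        rw [Fintype.prod_sum]
    _ = ∑ φ : Fin m → Fin N × Fin N, ∑ σ : Equiv.Perm (Fin n),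
          ((Equiv.Perm.sign σ : ℤ) : K) * ∏ i : Fin m,
            (B (σ ⟨2 * i.val, by have := i.2; omega⟩) (φ i).1 * A (φ i).1 (φ i).2 *
              B (σ ⟨2 * i.val + 1, by have := i.2; omega⟩) (φ i).2) := by
        simp_rw [Finset.mul_sum]
        rw [Finset.sum_comm]
    _ = ∑ φ : Fin m → Fin N × Fin N, Fterm hm B A (pack hm φ) := by
        refine Finset.sum_congr rfl fun φ _ => ?_
        have hprod : ∀ σ : Equiv.Perm (Fin n),
            (∏ i : Fin m,
              (B (σ ⟨2 * i.val, by have := i.2; omega⟩) (φ i).1 * A (φ i).1 (φ i).2 *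
                B (σ ⟨2 * i.val + 1, by have := i.2; omega⟩) (φ i).2)) =
            (∏ i : Fin m, A (φ i).1 (φ i).2) *
              ∏ j : Fin n, B (σ j) (pack hm φ j) := by
          intro σ
          rw [prod_split hm (fun j => B (σ j) (pack hm φ j))]
          rw [← Finset.prod_mul_distrib]
          refine Finset.prod_congr rfl fun i _ => ?_
          rw [pack_even hm φ (i := i) rfl, pack_odd hm φ (i := i) rfl]
          ring
        simp_rw [hprod]
        unfold Fterm
        rw [Matrix.det_apply', Finset.sum_mul]
        have hA2 : (∏ i : Fin m, A ((pack hm φ) ⟨2 * i.val, by have := i.2; omega⟩)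
            ((pack hm φ) ⟨2 * i.val + 1, by have := i.2; omega⟩)) =
            ∏ i : Fin m, A (φ i).1 (φ i).2 := by
          refine Finset.prod_congr rfl fun i _ => ?_
          rw [pack_even hm φ (i := i) rfl, pack_odd hm φ (i := i) rfl]
        rw [hA2]
        refine Finset.sum_congr rfl fun σ _ => ?_
        simp only [Matrix.submatrix_apply, id_eq]
        ring
    _ = ∑ g : Fin n → Fin N, Fterm hm B A g :=
        Equiv.sum_comp (pairFunEquiv hm) (Fterm hm B A)

lemma main_aux (hm : n = 2 * m) (B : Matrix (Fin n) (Fin N) K) (A : Matrix (Fin N) (Fin N) K) :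
    ∑ I : {I : Finset (Fin N) // I.card = n},
      (B.submatrix id (fun i => I.1.orderEmbOfFin I.2 i)).det *
        (((2 : K) ^ m * (Nat.factorial m : K))⁻¹ *
          ∑ τ : Equiv.Perm (Fin n), ((Equiv.Perm.sign τ : ℤ) : K) *
            ∏ i : Fin m,
              A.submatrix (fun i => I.1.orderEmbOfFin I.2 i) (fun i => I.1.orderEmbOfFin I.2 i)
                (τ ⟨2 * i.val, by have := i.2; omega⟩)
                (τ ⟨2 * i.val + 1, by have := i.2; omega⟩)) =
    ((2 : K) ^ m * (Nat.factorial m : K))⁻¹ *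
      ∑ σ : Equiv.Perm (Fin n), ((Equiv.Perm.sign σ : ℤ) : K) *
        ∏ i : Fin m, (B * A * Bᵀ) (σ ⟨2 * i.val, by have := i.2; omega⟩)
          (σ ⟨2 * i.val + 1, by have := i.2; omega⟩) := by
  rw [step4 hm B A, ← step3 hm B A, ← step2 hm B A, Finset.mul_sum, Fintype.sum_prod_type]
  refine Finset.sum_congr rfl fun I _ => ?_
  rw [← Finset.mul_sum, step1 hm B A I.1 I.2]
  ring

end PfMSF

/-- Minor summation formula for Pfaffians: for an `n × N` matrix `B` (with `n` even,
`0 < n ≤ N`) and an `N × N` skew-symmetric matrix `A` over a field of characteristic zero,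
`Σ_{I ⊆ [N], |I| = n} det(B_I) · Pf(A_I) = Pf(B·A·Bᵀ)`, where the columns (resp. rows and
columns) indexed by `I` are taken in increasing order. -/
theorem pfaffian_minor_summation {K : Type*} [Field K] [CharZero K]
    (n N : ℕ) (hn : 0 < n) (heven : Even n) (hnN : n ≤ N)
    (B : Matrix (Fin n) (Fin N) K) (A : Matrix (Fin N) (Fin N) K)
    (hA : Aᵀ = -A) :
    ∑ I : {I : Finset (Fin N) // I.card = n},
      (B.submatrix id (fun i => I.1.orderEmbOfFin I.2 i)).det *
        pfaffian (A.submatrix (fun i => I.1.orderEmbOfFin I.2 i)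
          (fun i => I.1.orderEmbOfFin I.2 i)) =
      pfaffian (B * A * Bᵀ) := by
  have hm : n = 2 * (n / 2) := by obtain ⟨k, hk⟩ := heven; omega
  exact PfMSF.main_aux hm B A
end

section
/- Let λ be a partition and let n, k be integers with either n > k ≥ ℓ(λ), or n = k = ℓ(λ) ≥ 1. Set ρ_i = λ_i − i (with λ_i = 0 for i > ℓ(λ)). Then ∏_{1 ≤ i < j ≤ k} (ρ_i − ρ_j)/(2n + ρ_i + ρ_j) · ∏_{i=1}^{k} (2n − 2i)! / ( 2·(ρ_i + k)!·(ρ_i + 2n − k − 1)!·(ρ_i + n) ) = 1 / ( H(λ)² · o_λ(2n) ). -/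
/-- `ρ_i = λ_i − i` (here `a` is the 0-indexed row, so this is `λ_{a+1} − (a+1)`). -/
def rho (lam : ℕ → ℕ) (a : ℕ) : ℚ := (lam a : ℚ) - (a + 1)

/-- The hook product `H(λ) = ∏_{(i,j) ∈ λ} (λ_i − j + λ'_j − i + 1)` of a partition with `m`
parts, the parts being `lam 0 ≥ lam 1 ≥ …` (0-indexed). -/
def hookProd (m : ℕ) (lam : ℕ → ℕ) : ℚ :=
  ∏ a ∈ Finset.range m, ∏ j ∈ Finset.Icc 1 (lam a),
    ((lam a : ℚ) - j + (((Finset.range m).filter fun b => j ≤ lam b).card : ℚ) - a)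

/-- Weyl's product formula for the dimension `o_λ(2n)` of the irreducible representation of
`O(2n)` of highest weight `λ` (for `ℓ(λ) ≤ n`):
`o_λ(2n) = c_λ · ∏_{1 ≤ i < j ≤ n} ((ρ_i − ρ_j)(ρ_i + ρ_j + 2n)) / ((j − i)(2n − i − j))`
with `c_λ = 2` if `λ_n > 0` and `c_λ = 1` otherwise. -/
def oDim (n : ℕ) (lam : ℕ → ℕ) : ℚ :=
  (if 0 < lam (n - 1) then 2 else 1) *
    ∏ a ∈ Finset.range n, ∏ b ∈ Finset.Ioo a n,
      ((rho lam a - rho lam b) * (rho lam a + rho lam b + 2 * n)) /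
        (((b : ℚ) - a) * (2 * (n : ℚ) - (a + 1) - (b + 1)))


open Finset



/-- ascending telescope -/
lemma FB (c p : ℕ) : ∀ m n : ℕ, p ≤ m → m ≤ n →
    (c + (m - p)).factorial * ∏ j ∈ Ico m n, (c + (j - p) + 1) = (c + (n - p)).factorial := by
  intro m n hpm hmn
  induction n, hmn using Nat.le_induction with
  | base => simp
  | succ n hmn ih =>
    rw [Finset.prod_Ico_succ_top hmn, ← mul_assoc, ih]
    have h1 : c + (n + 1 - p) = (c + (n - p)) + 1 := by omega
    rw [h1, Nat.factorial_succ]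
    ring

/-- descending telescope -/
lemma FD (c : ℕ) : ∀ m n : ℕ, m ≤ n → n ≤ c →
    (c - n).factorial * ∏ j ∈ Ico m n, (c - j) = (c - m).factorial := by
  intro m n hmn
  induction n, hmn using Nat.le_induction with
  | base => simp
  | succ n hmn ih =>
    intro hc
    rw [Finset.prod_Ico_succ_top hmn]
    have h1 : (c - (n+1)).factorial * (c - n) = (c - n).factorial := by
      have h2 : c - n = (c - (n+1)) + 1 := by omega
      rw [h2, Nat.factorial_succ]; ring
    calc (c - (n + 1)).factorial * ((∏ k ∈ Ico m n, (c - k)) * (c - n))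
        = (c - n).factorial * ∏ k ∈ Ico m n, (c - k) := by rw [← h1]; ring
      _ = (c - m).factorial := ih (by omega)

section
variable (ℓ : ℕ) (lam : ℕ → ℕ)

/-- conjugate partition count -/
def conj (j : ℕ) : ℕ := ((Finset.range ℓ).filter fun b => j ≤ lam b).card

/-- hook length of cell (a, j), 0-indexed row a, 1-indexed column j -/
def hk (a j : ℕ) : ℕ := (lam a - j) + (conj ℓ lam j - (a + 1)) + 1

lemma conj_le (j : ℕ) : conj ℓ lam j ≤ ℓ := by
  simpa [conj] using Finset.card_filter_le (Finset.range ℓ) _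

lemma conj_anti (hmono : ∀ ⦃i j : ℕ⦄, i ≤ j → lam j ≤ lam i) {j j' : ℕ} (h : j ≤ j') :
    conj ℓ lam j' ≤ conj ℓ lam j := by
  apply Finset.card_le_card
  intro b hb
  simp only [Finset.mem_filter] at hb ⊢
  exact ⟨hb.1, le_trans h hb.2⟩

lemma conj_ge (hmono : ∀ ⦃i j : ℕ⦄, i ≤ j → lam j ≤ lam i) {a j : ℕ} (ha : a < ℓ)
    (hj : j ≤ lam a) : a + 1 ≤ conj ℓ lam j := by
  have : Finset.range (a+1) ⊆ (Finset.range ℓ).filter fun b => j ≤ lam b := by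
    intro b hb
    simp only [Finset.mem_range] at hb
    simp only [Finset.mem_filter, Finset.mem_range]
    exact ⟨by omega, le_trans hj (hmono (by omega))⟩
  simpa [conj] using Finset.card_le_card this

lemma conj_lt (hmono : ∀ ⦃i j : ℕ⦄, i ≤ j → lam j ≤ lam i) {b j : ℕ} (h : lam b < j) :
    conj ℓ lam j ≤ b := by
  have : (Finset.range ℓ).filter (fun b' => j ≤ lam b') ⊆ Finset.range b := by
    intro b' hb'
    simp only [Finset.mem_filter, Finset.mem_range] at hb' ⊢
    by_contra hc
    have := hmono (show b ≤ b' by omega)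
    omega
  simpa [conj] using Finset.card_le_card this

lemma conj_ge' (hmono : ∀ ⦃i j : ℕ⦄, i ≤ j → lam j ≤ lam i) {b j : ℕ} (hb : b < ℓ)
    (h : j ≤ lam b) : b + 1 ≤ conj ℓ lam j := conj_ge ℓ lam hmono hb h

/-- The hooks of row `a` together with the row-differences fill `Icc 1 (lam a + ℓ - (a+1))`. -/
lemma hook_row (hmono : ∀ ⦃i j : ℕ⦄, i ≤ j → lam j ≤ lam i)
    (hpos : ∀ i, i < ℓ → 0 < lam i) {a : ℕ} (ha : a < ℓ) :
    (∏ j ∈ Icc 1 (lam a), hk ℓ lam a j) * (∏ b ∈ Ioo a ℓ, (lam a - lam b + (b - a))) =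
      (lam a + ℓ - (a + 1)).factorial := by
  have hla : 0 < lam a := hpos a ha
  set A := (Icc 1 (lam a)).image (hk ℓ lam a) with hA
  set B := (Ioo a ℓ).image (fun b => lam a - lam b + (b - a)) with hB
  have hinj1 : Set.InjOn (hk ℓ lam a) (Icc 1 (lam a)) := by
    intro x hx y hy hxy
    simp only [Finset.coe_Icc, Set.mem_Icc] at hx hy
    by_contra hne
    have key : ∀ x y : ℕ, 1 ≤ x → x ≤ lam a → 1 ≤ y → y ≤ lam a → x < y →
        hk ℓ lam a y < hk ℓ lam a x := by
      intro x y hx1 hx2 hy1 hy2 hlt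
      have h1 := conj_anti ℓ lam hmono (le_of_lt hlt)
      have h2 := conj_ge ℓ lam hmono ha hy2
      have h3 := conj_ge ℓ lam hmono ha hx2
      simp only [hk]; omega
    rcases lt_or_gt_of_ne hne with h | h
    · exact absurd hxy (ne_of_gt (key x y hx.1 hx.2 hy.1 hy.2 h))
    · exact absurd hxy (ne_of_lt (key y x hy.1 hy.2 hx.1 hx.2 h))
  have hinj2 : Set.InjOn (fun b => lam a - lam b + (b - a)) (Ioo a ℓ) := by
    intro x hx y hy hxy
    simp only [Finset.coe_Ioo, Set.mem_Ioo] at hx hy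
    simp only at hxy
    by_contra hne
    have key : ∀ x y : ℕ, a < x → x < y →
        lam a - lam x + (x - a) < lam a - lam y + (y - a) := by
      intro x y hx1 hlt
      have h1 : lam y ≤ lam x := hmono (le_of_lt hlt)
      have h2 : lam x ≤ lam a := hmono (le_of_lt hx1)
      omega
    rcases lt_or_gt_of_ne hne with h | h
    · exact absurd hxy (ne_of_lt (key x y hx.1 h))
    · exact absurd hxy (ne_of_gt (key y x hy.1 h))
  have hdisj : Disjoint A B := by
    rw [Finset.disjoint_left]
    intro v hvA hvB
    simp only [hA, hB, Finset.mem_image, Finset.mem_Icc, Finset.mem_Ioo] at hvA hvB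
    obtain ⟨j, ⟨hj1, hj2⟩, hjv⟩ := hvA
    obtain ⟨b, ⟨hb1, hb2⟩, hbv⟩ := hvB
    have hlb : lam b ≤ lam a := hmono (le_of_lt hb1)
    have hcja : a + 1 ≤ conj ℓ lam j := conj_ge ℓ lam hmono ha hj2
    rcases le_or_gt j (lam b) with h | h
    · have := conj_ge' ℓ lam hmono hb2 h
      simp only [hk] at hjv; omega
    · have := conj_lt ℓ lam hmono h
      simp only [hk] at hjv; omega
  have hsub : A ∪ B ⊆ Icc 1 (lam a + ℓ - (a + 1)) := by
    intro v hv
    rcases Finset.mem_union.mp hv with hv | hv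
    · simp only [hA, Finset.mem_image, Finset.mem_Icc] at hv
      obtain ⟨j, ⟨hj1, hj2⟩, hjv⟩ := hv
      have h1 := conj_le ℓ lam j
      have h2 := conj_ge ℓ lam hmono ha hj2
      simp only [hk] at hjv
      simp only [Finset.mem_Icc]; omega
    · simp only [hB, Finset.mem_image, Finset.mem_Ioo] at hv
      obtain ⟨b, ⟨hb1, hb2⟩, hbv⟩ := hv
      have hlb : lam b ≤ lam a := hmono (le_of_lt hb1)
      simp only [Finset.mem_Icc]; omega
  have hcardA : A.card = lam a := by
    rw [hA, Finset.card_image_of_injOn hinj1, Nat.card_Icc]; omega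
  have hcardB : B.card = ℓ - (a + 1) := by
    rw [hB, Finset.card_image_of_injOn hinj2, Nat.card_Ioo]
    omega
  have hunion : A ∪ B = Icc 1 (lam a + ℓ - (a + 1)) := by
    apply Finset.eq_of_subset_of_card_le hsub
    rw [Finset.card_union_of_disjoint hdisj, hcardA, hcardB, Nat.card_Icc]
    omega
  have := Finset.prod_union hdisj (f := id)
  rw [hunion] at this
  rw [Finset.prod_image hinj1, Finset.prod_image hinj2] at this
  calc (∏ j ∈ Icc 1 (lam a), hk ℓ lam a j) * (∏ b ∈ Ioo a ℓ, (lam a - lam b + (b - a)))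
      = ∏ v ∈ Icc 1 (lam a + ℓ - (a + 1)), id v := by rw [this]; simp
    _ = (lam a + ℓ - (a + 1)).factorial := by
        simp only [id]
        rw [← Finset.Ico_add_one_right_eq_Icc]
        exact Finset.prod_Ico_id_eq_factorial (lam a + ℓ - (a + 1))

end

section
variable (ℓ : ℕ) (lam : ℕ → ℕ)

lemma rho_diff_cast (hmono : ∀ ⦃i j : ℕ⦄, i ≤ j → lam j ≤ lam i) {a b : ℕ} (hab : a < b) :
    rho lam a - rho lam b = ((lam a - lam b + (b - a) : ℕ) : ℚ) := by
  have h1 : lam b ≤ lam a := hmono (le_of_lt hab)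
  simp only [rho]
  rw [Nat.cast_add, Nat.cast_sub h1, Nat.cast_sub (le_of_lt hab)]
  push_cast
  ring

lemma hk_cast (hmono : ∀ ⦃i j : ℕ⦄, i ≤ j → lam j ≤ lam i) {a j : ℕ} (ha : a < ℓ)
    (hj1 : 1 ≤ j) (hj2 : j ≤ lam a) :
    ((lam a : ℚ) - j + ((((Finset.range ℓ).filter fun b => j ≤ lam b).card : ℚ)) - a)
      = ((hk ℓ lam a j : ℕ) : ℚ) := by
  have h2 : a + 1 ≤ conj ℓ lam j := conj_ge ℓ lam hmono ha hj2
  simp only [hk, conj] at *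
  rw [Nat.cast_add, Nat.cast_add, Nat.cast_sub hj2, Nat.cast_sub h2]
  push_cast
  ring

/-- Hook product formula: `H(λ) * ∏_{a<b<ℓ}(ρ_a - ρ_b) = ∏_a (λ_a + ℓ - a - 1)!` -/
lemma hookE (hmono : ∀ ⦃i j : ℕ⦄, i ≤ j → lam j ≤ lam i) (hpos : ∀ i, i < ℓ → 0 < lam i) :
    (∏ a ∈ Finset.range ℓ, ∏ j ∈ Icc 1 (lam a),
      ((lam a : ℚ) - j + (((Finset.range ℓ).filter fun b => j ≤ lam b).card : ℚ) - a)) *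
      (∏ a ∈ Finset.range ℓ, ∏ b ∈ Ioo a ℓ, (rho lam a - rho lam b)) =
      ∏ a ∈ Finset.range ℓ, ((lam a + ℓ - (a + 1)).factorial : ℚ) := by
  rw [← Finset.prod_mul_distrib]
  apply Finset.prod_congr rfl
  intro a ha
  rw [Finset.mem_range] at ha
  have e1 : (∏ j ∈ Icc 1 (lam a),
      ((lam a : ℚ) - j + (((Finset.range ℓ).filter fun b => j ≤ lam b).card : ℚ) - a)) =
      ((∏ j ∈ Icc 1 (lam a), hk ℓ lam a j : ℕ) : ℚ) := by
    push_cast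
    apply Finset.prod_congr rfl
    intro j hj
    rw [Finset.mem_Icc] at hj
    have := hk_cast ℓ lam hmono ha hj.1 hj.2
    push_cast at this ⊢
    exact this
  have e2 : (∏ b ∈ Ioo a ℓ, (rho lam a - rho lam b)) =
      ((∏ b ∈ Ioo a ℓ, (lam a - lam b + (b - a)) : ℕ) : ℚ) := by
    push_cast
    apply Finset.prod_congr rfl
    intro b hb
    rw [Finset.mem_Ioo] at hb
    have := rho_diff_cast lam hmono hb.1
    push_cast at this ⊢
    exact this
  rw [e1, e2, ← Nat.cast_mul, hook_row ℓ lam hmono hpos ha]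

end

section g2
variable (ℓ n : ℕ) (lam : ℕ → ℕ)

lemma rho_sum_cast (hmono : ∀ ⦃i j : ℕ⦄, i ≤ j → lam j ≤ lam i) {a b : ℕ} (hab : a < b)
    (hbn : b < n) :
    rho lam a + rho lam b + 2 * (n:ℚ) = ((lam a + lam b + 2 * n - a - b - 2 : ℕ) : ℚ) := by
  have hzz : ((lam a + lam b + 2 * n - a - b - 2 : ℕ) : ℤ)
      = (lam a : ℤ) + lam b + 2 * n - a - b - 2 := by omega
  have hq : ((lam a + lam b + 2 * n - a - b - 2 : ℕ) : ℚ)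
      = (lam a : ℚ) + lam b + 2 * n - a - b - 2 := by exact_mod_cast hzz
  simp only [rho, hq]; ring

lemma den_cast1 {a b : ℕ} (hab : a < b) : (b : ℚ) - a = ((b - a : ℕ) : ℚ) := by
  have hzz : ((b - a : ℕ) : ℤ) = (b:ℤ) - a := by omega
  have hq : ((b - a : ℕ) : ℚ) = (b:ℚ) - a := by exact_mod_cast hzz
  rw [hq]

lemma den_cast2 {a b : ℕ} (h : a + b + 2 ≤ 2 * n) :
    2 * (n:ℚ) - (a + 1) - (b + 1) = ((2 * n - a - b - 2 : ℕ) : ℚ) := by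
  have hzz : ((2 * n - a - b - 2 : ℕ) : ℤ) = 2*(n:ℤ) - a - b - 2 := by omega
  have hq : ((2 * n - a - b - 2 : ℕ) : ℚ) = 2*(n:ℚ) - a - b - 2 := by exact_mod_cast hzz
  rw [hq]; ring

lemma cpos {x : ℕ} (h : 0 < x) : (0:ℚ) < (x:ℚ) := by exact_mod_cast h

lemma frac1 (A B C : ℚ) (hB : B ≠ 0) : (A / B) * ((A * B) / C) = A ^ 2 / C := by
  field_simp

/-- the oDim pair term, as a cast of naturals -/
lemma oT_cast (hmono : ∀ ⦃i j : ℕ⦄, i ≤ j → lam j ≤ lam i) {a b : ℕ} (hab : a < b)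
    (hbn : b < n) :
    ((rho lam a - rho lam b) * (rho lam a + rho lam b + 2 * (n:ℚ))) /
        (((b : ℚ) - a) * (2 * (n : ℚ) - (a + 1) - (b + 1))) =
    (((lam a - lam b + (b - a) : ℕ) : ℚ) * ((lam a + lam b + 2 * n - a - b - 2 : ℕ) : ℚ)) /
        (((b - a : ℕ) : ℚ) * ((2 * n - a - b - 2 : ℕ) : ℚ)) := by
  rw [rho_diff_cast lam hmono hab, rho_sum_cast n lam hmono hab hbn, den_cast1 hab,
    den_cast2 n (by omega)]

lemma oT_pos (hmono : ∀ ⦃i j : ℕ⦄, i ≤ j → lam j ≤ lam i) {a b : ℕ} (hab : a < b)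
    (hbn : b < n) :
    0 < ((rho lam a - rho lam b) * (rho lam a + rho lam b + 2 * (n:ℚ))) /
        (((b : ℚ) - a) * (2 * (n : ℚ) - (a + 1) - (b + 1))) := by
  rw [oT_cast n lam hmono hab hbn]
  have h1 : 0 < lam a - lam b + (b - a) := by
    have := hmono (le_of_lt hab); omega
  have h2 : 0 < lam a + lam b + 2 * n - a - b - 2 := by omega
  have h3 : 0 < b - a := by omega
  have h4 : 0 < 2 * n - a - b - 2 := by omega
  exact div_pos (mul_pos (cpos h1) (cpos h2)) (mul_pos (cpos h3) (cpos h4))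

end g2

section rowsec
variable (ℓ n : ℕ) (lam : ℕ → ℕ)

/-- main-case row identity -/
lemma base_row (hmono : ∀ ⦃i j : ℕ⦄, i ≤ j → lam j ≤ lam i)
    (hpos : ∀ i, i < ℓ → 0 < lam i) (hzero : ∀ i, ℓ ≤ i → lam i = 0)
    {a : ℕ} (ha : a < ℓ) (hln : ℓ ≤ n) (han : a + 2 ≤ n) :
    (∏ b ∈ Ioo a ℓ, (rho lam a - rho lam b) / (2 * (n : ℚ) + rho lam a + rho lam b)) *
      (((2 * n - 2 * (a + 1)).factorial : ℚ) /
        (2 * ((lam a + ℓ - (a + 1)).factorial : ℚ) *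
          ((lam a + 2 * n - ℓ - (a + 1) - 1).factorial : ℚ) * (rho lam a + n))) *
      (∏ b ∈ Ioo a n,
        ((rho lam a - rho lam b) * (rho lam a + rho lam b + 2 * (n:ℚ))) /
          (((b : ℚ) - a) * (2 * (n : ℚ) - (a + 1) - (b + 1)))) *
      ((lam a + ℓ - (a + 1)).factorial : ℚ) ^ 2 =
    (∏ b ∈ Ioo a ℓ, (rho lam a - rho lam b)) ^ 2 := by
  have hL : 0 < lam a := hpos a ha
  -- split the oDim row product at ℓ
  have hsplit : (∏ b ∈ Ioo a n,
      ((rho lam a - rho lam b) * (rho lam a + rho lam b + 2 * (n:ℚ))) /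
        (((b : ℚ) - a) * (2 * (n : ℚ) - (a + 1) - (b + 1)))) =
      (∏ b ∈ Ioo a ℓ,
        ((rho lam a - rho lam b) * (rho lam a + rho lam b + 2 * (n:ℚ))) /
          (((b : ℚ) - a) * (2 * (n : ℚ) - (a + 1) - (b + 1)))) *
      (∏ b ∈ Ico ℓ n,
        ((rho lam a - rho lam b) * (rho lam a + rho lam b + 2 * (n:ℚ))) /
          (((b : ℚ) - a) * (2 * (n : ℚ) - (a + 1) - (b + 1)))) := by
    rw [← Finset.Ico_add_one_left_eq_Ioo, ← Finset.prod_Ico_consecutive _ (by omega : a + 1 ≤ ℓ) hln,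
      Finset.Ico_add_one_left_eq_Ioo]
  rw [hsplit]
  -- rewrite each factor termwise as casts
  have e0 : ∀ b ∈ Ioo a ℓ,
      (rho lam a - rho lam b) / (2 * (n : ℚ) + rho lam a + rho lam b) =
      (rho lam a - rho lam b) / (((lam a + lam b + 2 * n - a - b - 2 : ℕ) : ℚ)) := by
    intro b hb
    rw [Finset.mem_Ioo] at hb
    rw [show 2 * (n : ℚ) + rho lam a + rho lam b = rho lam a + rho lam b + 2 * (n:ℚ) by ring,
      rho_sum_cast n lam hmono hb.1 (by omega)]
  have e1 : ∀ b ∈ Ioo a ℓ,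
      ((rho lam a - rho lam b) * (rho lam a + rho lam b + 2 * (n:ℚ))) /
          (((b : ℚ) - a) * (2 * (n : ℚ) - (a + 1) - (b + 1))) =
      ((rho lam a - rho lam b) * (((lam a + lam b + 2 * n - a - b - 2 : ℕ) : ℚ))) /
          (((b - a : ℕ) : ℚ) * ((2 * n - a - b - 2 : ℕ) : ℚ)) := by
    intro b hb
    rw [Finset.mem_Ioo] at hb
    rw [rho_sum_cast n lam hmono hb.1 (by omega), den_cast1 hb.1, den_cast2 n (by omega)]
  have e2 : ∀ b ∈ Ico ℓ n,
      ((rho lam a - rho lam b) * (rho lam a + rho lam b + 2 * (n:ℚ))) /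
          (((b : ℚ) - a) * (2 * (n : ℚ) - (a + 1) - (b + 1))) =
      (((lam a + b - a : ℕ) : ℚ) * ((lam a + 2 * n - a - b - 2 : ℕ) : ℚ)) /
        (((b - a : ℕ) : ℚ) * ((2 * n - a - b - 2 : ℕ) : ℚ)) := by
    intro b hb
    rw [Finset.mem_Ico] at hb
    have hb0 : lam b = 0 := hzero b hb.1
    have hab : a < b := by omega
    rw [oT_cast n lam hmono hab hb.2]
    have g1 : lam a - lam b + (b - a) = lam a + b - a := by omega
    have g2 : lam a + lam b + 2 * n - a - b - 2 = lam a + 2 * n - a - b - 2 := by omega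
    rw [g1, g2]
  rw [Finset.prod_congr rfl e0, Finset.prod_congr rfl e1, Finset.prod_congr rfl e2]
  simp only [Finset.prod_div_distrib, Finset.prod_mul_distrib]
  -- names for the atoms
  have sρ : rho lam a + n = ((lam a + n - (a + 1) : ℕ) : ℚ) := by
    have hzz : ((lam a + n - (a + 1) : ℕ) : ℤ) = (lam a : ℤ) + n -a - 1 := by omega
    have hq : ((lam a + n - (a + 1) : ℕ) : ℚ) = (lam a : ℚ) + n - a - 1 := by
      exact_mod_cast hzz
    rw [hq, rho]; ring
  rw [sρ]
  set er := ∏ b ∈ Ioo a ℓ, (rho lam a - rho lam b) with her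
  set S := ∏ b ∈ Ioo a ℓ, ((lam a + lam b + 2 * n - a - b - 2 : ℕ) : ℚ) with hSd
  set D1a := ∏ b ∈ Ioo a ℓ, ((b - a : ℕ) : ℚ) with hD1ad
  set D2a := ∏ b ∈ Ioo a ℓ, ((2 * n - a - b - 2 : ℕ) : ℚ) with hD2ad
  set N1 := ∏ b ∈ Ico ℓ n, ((lam a + b - a : ℕ) : ℚ) with hN1d
  set N2 := ∏ b ∈ Ico ℓ n, ((lam a + 2 * n - a - b - 2 : ℕ) : ℚ) with hN2d
  set D1b := ∏ b ∈ Ico ℓ n, ((b - a : ℕ) : ℚ) with hD1bd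
  set D2b := ∏ b ∈ Ico ℓ n, ((2 * n - a - b - 2 : ℕ) : ℚ) with hD2bd
  set fa := ((lam a + ℓ - (a + 1)).factorial : ℚ) with hfad
  set G := ((lam a + 2 * n - ℓ - (a + 1) - 1).factorial : ℚ) with hGd
  set X1 := ((lam a + n - (a + 1)).factorial : ℚ) with hX1d
  set X2 := ((lam a + n - (a + 1) - 1).factorial : ℚ) with hX2d
  set Y1 := ((n - (a + 1)).factorial : ℚ) with hY1d
  set Y2 := ((n - (a + 1) - 1).factorial : ℚ) with hY2d
  set Z1 := ((2 * n - 2 * (a + 1)).factorial : ℚ) with hZ1d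
  set Z2 := ((2 * n - 2 * (a + 1) - 1).factorial : ℚ) with hZ2d
  set L1 := ((lam a + n - (a + 1) : ℕ) : ℚ) with hL1d
  set K1 := ((n - (a + 1) : ℕ) : ℚ) with hK1d
  -- nonzeroness
  have hfa : fa ≠ 0 := by rw [hfad]; exact_mod_cast Nat.factorial_ne_zero _
  have hG : G ≠ 0 := by rw [hGd]; exact_mod_cast Nat.factorial_ne_zero _
  have hX2 : X2 ≠ 0 := by rw [hX2d]; exact_mod_cast Nat.factorial_ne_zero _
  have hY2 : Y2 ≠ 0 := by rw [hY2d]; exact_mod_cast Nat.factorial_ne_zero _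
  have hZ2 : Z2 ≠ 0 := by rw [hZ2d]; exact_mod_cast Nat.factorial_ne_zero _
  have hL1 : L1 ≠ 0 := by rw [hL1d]; exact ne_of_gt (cpos (by omega))
  have hK1 : K1 ≠ 0 := by rw [hK1d]; exact ne_of_gt (cpos (by omega))
  have posIoo : ∀ P : ℕ → ℕ, (∀ b, a < b → b < ℓ → 0 < P b) →
      (0:ℚ) < ∏ b ∈ Ioo a ℓ, ((P b : ℕ) : ℚ) := by
    intro P hP
    apply Finset.prod_pos
    intro b hb
    rw [Finset.mem_Ioo] at hb
    exact cpos (hP b hb.1 hb.2)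
  have hS : S ≠ 0 := by
    rw [hSd]
    refine ne_of_gt (Finset.prod_pos fun b hb => ?_)
    rw [Finset.mem_Ioo] at hb
    exact cpos (by omega)
  have hD1a : D1a ≠ 0 := by
    rw [hD1ad]
    refine ne_of_gt (Finset.prod_pos fun b hb => ?_)
    rw [Finset.mem_Ioo] at hb
    exact cpos (by omega)
  have hD2a : D2a ≠ 0 := by
    rw [hD2ad]
    refine ne_of_gt (Finset.prod_pos fun b hb => ?_)
    rw [Finset.mem_Ioo] at hb
    exact cpos (by omega)
  -- telescopes
  have cN1 : fa * N1 = X1 := by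
    have hfb := FB (lam a) (a+1) ℓ n (by omega) hln
    have harg1 : ∀ b ∈ Ico ℓ n, lam a + (b - (a+1)) + 1 = lam a + b - a := by
      intro b hb; rw [Finset.mem_Ico] at hb; omega
    have g1 : lam a + (ℓ - (a+1)) = lam a + ℓ - (a+1) := by omega
    have g2 : lam a + (n - (a+1)) = lam a + n - (a+1) := by omega
    rw [g1, g2, Finset.prod_congr rfl harg1] at hfb
    rw [hfad, hX1d, hN1d, ← Nat.cast_prod, ← Nat.cast_mul, hfb]
  have cN2 : X2 * N2 = G := by
    have hfd := FD (lam a + 2 * n - (a+1) - 1) ℓ n hln (by omega)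
    have g1 : lam a + 2 * n - (a+1) - 1 - n = lam a + n - (a+1) - 1 := by omega
    have g2 : lam a + 2 * n - (a+1) - 1 - ℓ = lam a + 2 * n - ℓ - (a+1) - 1 := by omega
    have g3 : ∀ b ∈ Ico ℓ n, lam a + 2 * n - (a+1) - 1 - b = lam a + 2 * n - a - b - 2 := by
      intro b hb; omega
    rw [g1, g2, Finset.prod_congr rfl g3] at hfd
    rw [hX2d, hGd, hN2d, ← Nat.cast_prod, ← Nat.cast_mul, hfd]
  have cJ1 : D1a * D1b = Y1 := by
    have hfb := FB 0 (a+1) (a+1) n (le_refl _) (by omega)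
    have g1 : ∀ b ∈ Ico (a+1) n, 0 + (b - (a+1)) + 1 = b - a := by
      intro b hb; rw [Finset.mem_Ico] at hb; omega
    rw [Finset.prod_congr rfl g1] at hfb
    simp only [Nat.sub_self, Nat.add_zero, Nat.zero_add, Nat.factorial_zero, one_mul] at hfb
    rw [hD1ad, hD1bd, hY1d, ← Finset.Ico_add_one_left_eq_Ioo, ← Nat.cast_prod, ← Nat.cast_prod,
      ← Nat.cast_mul,
      Finset.prod_Ico_consecutive _ (by omega : a + 1 ≤ ℓ) hln, hfb]
  have cJ2 : Y2 * (D2a * D2b) = Z2 := by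
    have hfd := FD (2 * n - (a+1) - 1) (a+1) n (by omega) (by omega)
    have g1 : 2 * n - (a+1) - 1 - n = n - (a+1) - 1 := by omega
    have g2 : 2 * n - (a+1) - 1 - (a+1) = 2 * n - 2 * (a+1) - 1 := by omega
    have g3 : ∀ b ∈ Ico (a+1) n, 2 * n - (a+1) - 1 - b = 2 * n - a - b - 2 := by
      intro b hb; omega
    rw [g1, g2, Finset.prod_congr rfl g3] at hfd
    rw [hY2d, hZ2d, hD2ad, hD2bd, ← Finset.Ico_add_one_left_eq_Ioo, ← Nat.cast_prod, ← Nat.cast_prod,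
      ← Nat.cast_mul,
      Finset.prod_Ico_consecutive _ (by omega : a + 1 ≤ ℓ) hln, ← Nat.cast_mul, hfd]
  -- scalar factorial steps
  have csN : X1 = L1 * X2 := by
    rw [hX1d, hX2d, hL1d, ← Nat.cast_mul]
    congr 1
    rw [show lam a + n - (a+1) = (lam a + n - (a+1) - 1) + 1 by omega, Nat.factorial_succ]
    congr 1 <;> omega
  have csD : Y1 = K1 * Y2 := by
    rw [hY1d, hY2d, hK1d, ← Nat.cast_mul]
    congr 1
    rw [show n - (a+1) = (n - (a+1) - 1) + 1 by omega, Nat.factorial_succ]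
    congr 1 <;> omega
  have csF : Z1 = 2 * K1 * Z2 := by
    rw [hZ1d, hZ2d, hK1d]
    rw [show (2:ℚ) * ((n - (a+1) : ℕ) : ℚ) * ((2 * n - 2 * (a + 1) - 1).factorial : ℚ)
        = (((2 * (n - (a+1))) * (2 * n - 2 * (a + 1) - 1).factorial : ℕ) : ℚ) by push_cast; ring]
    congr 1
    rw [show 2 * n - 2 * (a+1) = (2 * n - 2 * (a+1) - 1) + 1 by omega, Nat.factorial_succ]
    congr 1 <;> omega
  -- substitute and finish
  have hN1v : N1 = X1 / fa := by rw [eq_div_iff hfa, mul_comm]; exact cN1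
  have hN2v : N2 = G / X2 := by rw [eq_div_iff hX2, mul_comm]; exact cN2
  have hD1bv : D1b = Y1 / D1a := by rw [eq_div_iff hD1a, mul_comm]; exact cJ1
  have hD2bv : D2b = Z2 / (Y2 * D2a) := by
    rw [eq_div_iff (mul_ne_zero hY2 hD2a)]
    linear_combination cJ2
  rw [hN1v, hN2v, hD1bv, hD2bv, csN, csD, csF]
  field_simp
end rowsec

section lastrow
variable (m : ℕ) (lam : ℕ → ℕ)

lemma last_row (hL : 0 < lam m) :
    (∏ b ∈ Ioo m (m+1),
        (rho lam m - rho lam b) / (2 * ((m+1 : ℕ) : ℚ) + rho lam m + rho lam b)) *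
      (((2 * (m+1) - 2 * (m + 1)).factorial : ℚ) /
        (2 * ((lam m + (m+1) - (m + 1)).factorial : ℚ) *
          ((lam m + 2 * (m+1) - (m+1) - (m + 1) - 1).factorial : ℚ) *
            (rho lam m + ((m+1 : ℕ) : ℚ)))) *
      (∏ b ∈ Ioo m (m+1),
        ((rho lam m - rho lam b) * (rho lam m + rho lam b + 2 * ((m+1 : ℕ) : ℚ))) /
          (((b : ℚ) - m) * (2 * ((m+1 : ℕ) : ℚ) - (m + 1) - (b + 1)))) *
      ((lam m + (m+1) - (m + 1)).factorial : ℚ) ^ 2 =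
    (∏ b ∈ Ioo m (m+1), (rho lam m - rho lam b)) ^ 2 * (1/2) := by
  have hIoo : Finset.Ioo m (m+1) = ∅ := by
    rw [← Finset.Ico_add_one_left_eq_Ioo]; exact Finset.Ico_self _
  rw [hIoo]
  simp only [Finset.prod_empty, one_mul, one_pow]
  have e1 : 2 * (m+1) - 2 * (m + 1) = 0 := by omega
  have e2 : lam m + (m+1) - (m + 1) = lam m := by omega
  have e3 : lam m + 2 * (m+1) - (m+1) - (m + 1) - 1 = lam m - 1 := by omega
  have e4 : rho lam m + ((m+1 : ℕ) : ℚ) = ((lam m : ℕ) : ℚ) := by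
    rw [rho]; push_cast; ring
  rw [e1, e2, e3, e4, Nat.factorial_zero]
  have hstep : (lam m).factorial = lam m * (lam m - 1).factorial := by
    rw [show lam m = (lam m - 1) + 1 by omega, Nat.factorial_succ]
    congr 1 <;> omega
  have h1 : ((lam m - 1).factorial : ℚ) ≠ 0 := by exact_mod_cast Nat.factorial_ne_zero _
  have h2 : ((lam m : ℕ) : ℚ) ≠ 0 := ne_of_gt (cpos hL)
  rw [hstep]
  push_cast
  field_simp
end lastrow


noncomputable def lhsF (n k : ℕ) (lam : ℕ → ℕ) : ℚ :=
  (∏ a ∈ Finset.range k, ∏ b ∈ Finset.Ioo a k,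
      (rho lam a - rho lam b) / (2 * (n : ℚ) + rho lam a + rho lam b)) *
    (∏ a ∈ Finset.range k,
      ((2 * n - 2 * (a + 1)).factorial : ℚ) /
        (2 * ((lam a + k - (a + 1)).factorial : ℚ) *
          ((lam a + 2 * n - k - (a + 1) - 1).factorial : ℚ) * (rho lam a + n)))


section basesec
variable (ℓ n : ℕ) (lam : ℕ → ℕ)

lemma key_prod (hmono : ∀ ⦃i j : ℕ⦄, i ≤ j → lam j ≤ lam i)
    (hpos : ∀ i, i < ℓ → 0 < lam i) (hzero : ∀ i, ℓ ≤ i → lam i = 0) (hln : ℓ ≤ n) :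
    ∏ a ∈ Finset.range ℓ,
      ((∏ b ∈ Ioo a ℓ, (rho lam a - rho lam b) / (2 * (n : ℚ) + rho lam a + rho lam b)) *
        (((2 * n - 2 * (a + 1)).factorial : ℚ) /
          (2 * ((lam a + ℓ - (a + 1)).factorial : ℚ) *
            ((lam a + 2 * n - ℓ - (a + 1) - 1).factorial : ℚ) * (rho lam a + n))) *
        (∏ b ∈ Ioo a n,
          ((rho lam a - rho lam b) * (rho lam a + rho lam b + 2 * (n:ℚ))) /
            (((b : ℚ) - a) * (2 * (n : ℚ) - (a + 1) - (b + 1)))) *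
        ((lam a + ℓ - (a + 1)).factorial : ℚ) ^ 2) =
    (∏ a ∈ Finset.range ℓ, (∏ b ∈ Ioo a ℓ, (rho lam a - rho lam b)) ^ 2) *
      (if ℓ = n ∧ 0 < n then 1/2 else 1) := by
  rcases eq_or_lt_of_le hln with heq | hlt
  · rcases Nat.eq_zero_or_pos n with hn0 | hn1
    · subst heq
      rw [if_neg (by omega)]
      subst hn0
      simp
    · obtain ⟨m, rfl⟩ : ∃ m, n = m + 1 := ⟨n - 1, by omega⟩
      subst heq
      rw [if_pos ⟨rfl, by omega⟩]
      rw [Finset.prod_range_succ, Finset.prod_range_succ]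
      have hrows : ∀ a ∈ Finset.range m,
          ((∏ b ∈ Ioo a (m+1),
              (rho lam a - rho lam b) / (2 * ((m+1 : ℕ) : ℚ) + rho lam a + rho lam b)) *
            (((2 * (m+1) - 2 * (a + 1)).factorial : ℚ) /
              (2 * ((lam a + (m+1) - (a + 1)).factorial : ℚ) *
                ((lam a + 2 * (m+1) - (m+1) - (a + 1) - 1).factorial : ℚ) *
                  (rho lam a + ((m+1 : ℕ) : ℚ)))) *
            (∏ b ∈ Ioo a (m+1),
              ((rho lam a - rho lam b) * (rho lam a + rho lam b + 2 * ((m+1 : ℕ) : ℚ))) /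
                (((b : ℚ) - a) * (2 * ((m+1 : ℕ) : ℚ) - (a + 1) - (b + 1)))) *
            ((lam a + (m+1) - (a + 1)).factorial : ℚ) ^ 2) =
          (∏ b ∈ Ioo a (m+1), (rho lam a - rho lam b)) ^ 2 := by
        intro a ha
        rw [Finset.mem_range] at ha
        exact base_row (m+1) (m+1) lam hmono hpos hzero (by omega) (le_refl _) (by omega)
      rw [Finset.prod_congr rfl hrows, last_row m lam (hpos m (by omega))]
      ring
  · rw [if_neg (by omega)]
    have hrows : ∀ a ∈ Finset.range ℓ,
        ((∏ b ∈ Ioo a ℓ, (rho lam a - rho lam b) / (2 * (n : ℚ) + rho lam a + rho lam b)) *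
          (((2 * n - 2 * (a + 1)).factorial : ℚ) /
            (2 * ((lam a + ℓ - (a + 1)).factorial : ℚ) *
              ((lam a + 2 * n - ℓ - (a + 1) - 1).factorial : ℚ) * (rho lam a + n))) *
          (∏ b ∈ Ioo a n,
            ((rho lam a - rho lam b) * (rho lam a + rho lam b + 2 * (n:ℚ))) /
              (((b : ℚ) - a) * (2 * (n : ℚ) - (a + 1) - (b + 1)))) *
          ((lam a + ℓ - (a + 1)).factorial : ℚ) ^ 2) =
        (∏ b ∈ Ioo a ℓ, (rho lam a - rho lam b)) ^ 2 := by
      intro a ha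
      rw [Finset.mem_range] at ha
      exact base_row ℓ n lam hmono hpos hzero ha hln (by omega)
    rw [Finset.prod_congr rfl hrows, mul_one]

lemma base (hmono : ∀ ⦃i j : ℕ⦄, i ≤ j → lam j ≤ lam i)
    (hpos : ∀ i, i < ℓ → 0 < lam i) (hzero : ∀ i, ℓ ≤ i → lam i = 0) (hln : ℓ ≤ n) :
    lhsF n ℓ lam = 1 / (hookProd ℓ lam ^ 2 * oDim n lam) := by
  -- hook product via factorials
  have hHE := hookE ℓ lam hmono hpos
  set E := ∏ a ∈ Finset.range ℓ, ∏ b ∈ Ioo a ℓ, (rho lam a - rho lam b) with hEd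
  set F := ∏ a ∈ Finset.range ℓ, ((lam a + ℓ - (a + 1)).factorial : ℚ) with hFd
  have hEpos : 0 < E := by
    rw [hEd]
    apply Finset.prod_pos
    intro a ha
    apply Finset.prod_pos
    intro b hb
    rw [Finset.mem_Ioo] at hb
    rw [rho_diff_cast lam hmono hb.1]
    exact cpos (by have := hmono (le_of_lt hb.1); omega)
  have hFpos : 0 < F := by
    rw [hFd]
    apply Finset.prod_pos
    intro a _
    exact cpos (Nat.factorial_pos _)
  have hHv : hookProd ℓ lam = F / E := by
    rw [eq_div_iff (ne_of_gt hEpos)]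
    exact hHE
  -- oDim : outer rows ≥ ℓ contribute 1
  have houter : ∀ a ∈ Ico ℓ n, (∏ b ∈ Ioo a n,
      ((rho lam a - rho lam b) * (rho lam a + rho lam b + 2 * (n:ℚ))) /
        (((b : ℚ) - a) * (2 * (n : ℚ) - (a + 1) - (b + 1)))) = 1 := by
    intro a ha
    rw [Finset.mem_Ico] at ha
    apply Finset.prod_eq_one
    intro b hb
    rw [Finset.mem_Ioo] at hb
    have h0a : lam a = 0 := hzero a ha.1
    have h0b : lam b = 0 := hzero b (by omega)
    have hnum : (rho lam a - rho lam b) * (rho lam a + rho lam b + 2 * (n:ℚ)) =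
        (((b : ℚ) - a) * (2 * (n : ℚ) - (a + 1) - (b + 1))) := by
      simp only [rho, h0a, h0b]
      ring
    rw [hnum]
    apply div_self
    apply ne_of_gt
    apply mul_pos
    · rw [den_cast1 hb.1]; exact cpos (by omega)
    · rw [den_cast2 n (by omega)]; exact cpos (by omega)
  have hOsplit : (∏ a ∈ Finset.range n, ∏ b ∈ Ioo a n,
      ((rho lam a - rho lam b) * (rho lam a + rho lam b + 2 * (n:ℚ))) /
        (((b : ℚ) - a) * (2 * (n : ℚ) - (a + 1) - (b + 1)))) =
      (∏ a ∈ Finset.range ℓ, ∏ b ∈ Ioo a n,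
        ((rho lam a - rho lam b) * (rho lam a + rho lam b + 2 * (n:ℚ))) /
          (((b : ℚ) - a) * (2 * (n : ℚ) - (a + 1) - (b + 1)))) := by
    rw [Finset.range_eq_Ico, ← Finset.prod_Ico_consecutive _ (Nat.zero_le ℓ) hln,
      Finset.prod_congr (rfl : Ico ℓ n = Ico ℓ n) houter, Finset.prod_const_one, mul_one,
      ← Finset.range_eq_Ico]
  have hOv : oDim n lam = (if 0 < lam (n-1) then (2:ℚ) else 1) *
      ∏ a ∈ Finset.range ℓ, ∏ b ∈ Ioo a n,
        ((rho lam a - rho lam b) * (rho lam a + rho lam b + 2 * (n:ℚ))) /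
          (((b : ℚ) - a) * (2 * (n : ℚ) - (a + 1) - (b + 1))) := by
    rw [oDim, hOsplit]
  -- positivity of oDim pieces
  have hOrowpos : (0:ℚ) < ∏ a ∈ Finset.range ℓ, ∏ b ∈ Ioo a n,
      ((rho lam a - rho lam b) * (rho lam a + rho lam b + 2 * (n:ℚ))) /
        (((b : ℚ) - a) * (2 * (n : ℚ) - (a + 1) - (b + 1))) := by
    apply Finset.prod_pos
    intro a ha
    apply Finset.prod_pos
    intro b hb
    rw [Finset.mem_Ioo] at hb
    exact oT_pos n lam hmono hb.1 hb.2
  have hcpos : (0:ℚ) < (if 0 < lam (n-1) then (2:ℚ) else 1) := by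
    split <;> norm_num
  have hOpos : 0 < oDim n lam := by
    rw [hOv]; exact mul_pos hcpos hOrowpos
  have hHpos : 0 < hookProd ℓ lam := by
    rw [hHv]; exact div_pos hFpos hEpos
  rw [eq_div_iff (ne_of_gt (mul_pos (pow_pos hHpos 2) hOpos))]
  rw [lhsF, hHv, hOv]
  have hkey := key_prod ℓ n lam hmono hpos hzero hln
  simp only [Finset.prod_mul_distrib, Finset.prod_pow] at hkey
  set c2 := (if 0 < lam (n-1) then (2:ℚ) else 1) with hc2d
  set w := (if ℓ = n ∧ 0 < n then (1/2:ℚ) else 1) with hwd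
  set P1 := ∏ a ∈ Finset.range ℓ, ∏ b ∈ Ioo a ℓ,
      (rho lam a - rho lam b) / (2 * (n : ℚ) + rho lam a + rho lam b) with hP1d
  set P2 := ∏ a ∈ Finset.range ℓ,
      ((2 * n - 2 * (a + 1)).factorial : ℚ) /
        (2 * ((lam a + ℓ - (a + 1)).factorial : ℚ) *
          ((lam a + 2 * n - ℓ - (a + 1) - 1).factorial : ℚ) * (rho lam a + n)) with hP2d
  set P3 := ∏ a ∈ Finset.range ℓ, ∏ b ∈ Ioo a n,
      ((rho lam a - rho lam b) * (rho lam a + rho lam b + 2 * (n:ℚ))) /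
        (((b : ℚ) - a) * (2 * (n : ℚ) - (a + 1) - (b + 1))) with hP3d
  have hcw : c2 * w = 1 := by
    rw [hc2d, hwd]
    by_cases hc : ℓ = n ∧ 0 < n
    · rw [if_pos hc, if_pos (by exact hpos (n-1) (by omega))]
      norm_num
    · rw [if_neg hc, if_neg ?hln0]
      · norm_num
      case hln0 =>
        intro hl
        have : lam (n-1) = 0 := by
          apply hzero
          omega
        omega
  calc P1 * P2 * ((F / E) ^ 2 * (c2 * P3))
      = (P1 * P2 * P3 * F ^ 2) * c2 / E ^ 2 := by
        rw [div_pow]; ring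
    _ = (E ^ 2 * w) * c2 / E ^ 2 := by rw [hkey]
    _ = (c2 * w) * (E ^ 2 / E ^ 2) := by ring
    _ = 1 := by
        rw [hcw, div_self (pow_ne_zero 2 (ne_of_gt hEpos)), one_mul]
end basesec

lemma step_row (n k : ℕ) (lam : ℕ → ℕ) (hk0 : lam k = 0) {a : ℕ} (ha : a < k)
    (hkn : k + 1 < n) :
    ((rho lam a - rho lam k) / (2 * (n : ℚ) + rho lam a + rho lam k)) *
      (((2 * n - 2 * (a + 1)).factorial : ℚ) /
        (2 * ((lam a + (k+1) - (a + 1)).factorial : ℚ) *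
          ((lam a + 2 * n - (k+1) - (a + 1) - 1).factorial : ℚ) * (rho lam a + n))) =
    ((2 * n - 2 * (a + 1)).factorial : ℚ) /
        (2 * ((lam a + k - (a + 1)).factorial : ℚ) *
          ((lam a + 2 * n - k - (a + 1) - 1).factorial : ℚ) * (rho lam a + n)) := by
  set A := lam a + k - (a + 1) with hA
  set B := lam a + 2 * n - (k + 1) - (a + 1) - 1 with hB
  have e1 : lam a + (k + 1) - (a + 1) = A + 1 := by omega
  have e2 : lam a + 2 * n - k - (a + 1) - 1 = B + 1 := by omega
  have cA : (A : ℚ) = (lam a : ℚ) + k - a - 1 := by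
    have hzz : ((A : ℕ) : ℤ) = (lam a : ℤ) + k - a - 1 := by omega
    exact_mod_cast hzz
  have cB : (B : ℚ) = (lam a : ℚ) + 2 * n - k - a - 3 := by
    have hzz : ((B : ℕ) : ℤ) = (lam a : ℤ) + 2 * n - k - a - 3 := by omega
    exact_mod_cast hzz
  have e3 : rho lam a - rho lam k = (A : ℚ) + 1 := by
    simp only [rho, hk0, cB, cA]; push_cast; ring
  have e4 : 2 * (n : ℚ) + rho lam a + rho lam k = (B : ℚ) + 1 := by
    simp only [rho, hk0, cB]; push_cast; ring
  have e5 : rho lam a + n = ((lam a + n - (a + 1) : ℕ) : ℚ) := by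
    have c5 : ((lam a + n - (a + 1) : ℕ) : ℚ) = (lam a : ℚ) + n - a - 1 := by
      have hzz : (((lam a + n - (a + 1) : ℕ) : ℕ) : ℤ) = (lam a : ℤ) + n - a - 1 := by omega
      exact_mod_cast hzz
    simp only [rho, c5]; push_cast; ring
  have h5 : (0:ℚ) < ((lam a + n - (a + 1) : ℕ) : ℚ) := by
    have : 0 < lam a + n - (a + 1) := by omega
    exact_mod_cast this
  rw [e1, e2, e3, e4, e5, Nat.factorial_succ A, Nat.factorial_succ B]
  have hA1 : ((A:ℚ) + 1) ≠ 0 := by positivity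
  have hB1 : ((B:ℚ) + 1) ≠ 0 := by positivity
  have hAf : ((A.factorial : ℚ)) ≠ 0 := by exact_mod_cast Nat.factorial_ne_zero A
  have hBf : ((B.factorial : ℚ)) ≠ 0 := by exact_mod_cast Nat.factorial_ne_zero B
  have h5' : ((lam a + n - (a + 1) : ℕ) : ℚ) ≠ 0 := ne_of_gt h5
  push_cast
  field_simp

lemma step (ℓ n k : ℕ) (lam : ℕ → ℕ)
    (hzero : ∀ i, ℓ ≤ i → lam i = 0) (hlk : ℓ ≤ k) (hkn : k + 1 < n) :
    lhsF n (k+1) lam = lhsF n k lam := by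
  have hk0 : lam k = 0 := hzero k hlk
  unfold lhsF
  have hIoo : Finset.Ioo k (k+1) = ∅ := by
    rw [← Finset.Ico_add_one_left_eq_Ioo]
    exact Finset.Ico_self (k+1)
  have hterm : ((2 * n - 2 * (k + 1)).factorial : ℚ) /
      (2 * ((lam k + (k+1) - (k + 1)).factorial : ℚ) *
        ((lam k + 2 * n - (k+1) - (k + 1) - 1).factorial : ℚ) * (rho lam k + n)) = 1 := by
    set C := 2 * n - 2 * (k + 1) - 1 with hC
    have e1 : lam k + (k+1) - (k+1) = 0 := by omega
    have e2 : lam k + 2 * n - (k + 1) - (k + 1) - 1 = C := by omega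
    have e3 : 2 * n - 2 * (k + 1) = C + 1 := by omega
    have e4 : rho lam k + n = ((n - (k+1) : ℕ) : ℚ) := by
      have c4 : ((n - (k+1) : ℕ) : ℚ) = (n : ℚ) - k - 1 := by
        have hzz : (((n - (k+1) : ℕ) : ℕ) : ℤ) = (n : ℤ) - k - 1 := by omega
        exact_mod_cast hzz
      simp only [rho, hk0, c4]; push_cast; ring
    have cC : ((C:ℚ)) + 1 = 2 * ((n - (k+1) : ℕ) : ℚ) := by
      have c1 : (C : ℚ) = 2*(n:ℚ) - 2*k - 3 := by
        have hzz : ((C : ℕ) : ℤ) = 2*(n:ℤ) - 2*k - 3 := by omega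
        exact_mod_cast hzz
      have c2 : ((n - (k+1) : ℕ) : ℚ) = (n : ℚ) - k - 1 := by
        have hzz : (((n - (k+1) : ℕ) : ℕ) : ℤ) = (n : ℤ) - k - 1 := by omega
        exact_mod_cast hzz
      rw [c1, c2]; ring
    rw [e1, e2, e3, e4, Nat.factorial_succ, Nat.factorial_zero]
    have h1 : ((C.factorial : ℚ)) ≠ 0 := by exact_mod_cast Nat.factorial_ne_zero C
    have h2 : (0:ℚ) < ((n - (k+1) : ℕ) : ℚ) := by
      have : 0 < n - (k+1) := by omega
      exact_mod_cast this
    push_cast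
    rw [show ((C:ℚ)+1) * C.factorial / (2 * 1 * C.factorial * ((n - (k+1) : ℕ) : ℚ))
        = ((C:ℚ)+1) / (2 * ((n - (k+1) : ℕ) : ℚ)) by field_simp, cC]
    field_simp
  have hsplit : ∀ a ∈ Finset.range k,
      (∏ b ∈ Finset.Ioo a (k+1),
        (rho lam a - rho lam b) / (2 * (n : ℚ) + rho lam a + rho lam b)) =
      (∏ b ∈ Finset.Ioo a k,
        (rho lam a - rho lam b) / (2 * (n : ℚ) + rho lam a + rho lam b)) *
      ((rho lam a - rho lam k) / (2 * (n : ℚ) + rho lam a + rho lam k)) := by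
    intro a ha
    rw [Finset.mem_range] at ha
    rw [← Finset.Ico_add_one_left_eq_Ioo, Finset.prod_Ico_succ_top (by omega), Finset.Ico_add_one_left_eq_Ioo]
  have h1 : (∏ a ∈ Finset.range (k+1), ∏ b ∈ Finset.Ioo a (k+1),
      (rho lam a - rho lam b) / (2 * (n : ℚ) + rho lam a + rho lam b)) =
      (∏ a ∈ Finset.range k, ∏ b ∈ Finset.Ioo a k,
        (rho lam a - rho lam b) / (2 * (n : ℚ) + rho lam a + rho lam b)) *
      (∏ a ∈ Finset.range k,
        ((rho lam a - rho lam k) / (2 * (n : ℚ) + rho lam a + rho lam k))) := by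
    rw [Finset.prod_range_succ, hIoo, Finset.prod_empty, mul_one,
      Finset.prod_congr rfl hsplit, Finset.prod_mul_distrib]
  have h2 : (∏ a ∈ Finset.range (k+1),
      ((2 * n - 2 * (a + 1)).factorial : ℚ) /
        (2 * ((lam a + (k+1) - (a + 1)).factorial : ℚ) *
          ((lam a + 2 * n - (k+1) - (a + 1) - 1).factorial : ℚ) * (rho lam a + n))) =
      ∏ a ∈ Finset.range k,
      ((2 * n - 2 * (a + 1)).factorial : ℚ) /
        (2 * ((lam a + (k+1) - (a + 1)).factorial : ℚ) *
          ((lam a + 2 * n - (k+1) - (a + 1) - 1).factorial : ℚ) * (rho lam a + n)) := by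
    rw [Finset.prod_range_succ, hterm, mul_one]
  rw [h1, h2, mul_assoc, ← Finset.prod_mul_distrib]
  congr 1
  apply Finset.prod_congr rfl
  intro a ha
  rw [Finset.mem_range] at ha
  exact step_row n k lam hk0 ha hkn

/-- For a partition `λ` and integers `n, k` with `n > k ≥ ℓ(λ)` or `n = k = ℓ(λ) ≥ 1`,
`∏_{1≤i<j≤k} (ρ_i − ρ_j)/(2n + ρ_i + ρ_j) · ∏_{i=1}^k (2n−2i)! / (2·(ρ_i+k)!·(ρ_i+2n−k−1)!·(ρ_i+n))
 = 1 / (H(λ)² · o_λ(2n))`. -/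
theorem dim_formula_k (ℓ : ℕ) (lam : ℕ → ℕ)
    (hmono : ∀ ⦃i j : ℕ⦄, i ≤ j → lam j ≤ lam i)
    (hpos : ∀ i, i < ℓ → 0 < lam i)
    (hzero : ∀ i, ℓ ≤ i → lam i = 0)
    (n k : ℕ)
    (hnk : (k < n ∧ ℓ ≤ k) ∨ (n = k ∧ k = ℓ ∧ 1 ≤ ℓ)) :
    (∏ a ∈ Finset.range k, ∏ b ∈ Finset.Ioo a k,
        (rho lam a - rho lam b) / (2 * (n : ℚ) + rho lam a + rho lam b)) *
      (∏ a ∈ Finset.range k,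
        ((2 * n - 2 * (a + 1)).factorial : ℚ) /
          (2 * ((lam a + k - (a + 1)).factorial : ℚ) *
            ((lam a + 2 * n - k - (a + 1) - 1).factorial : ℚ) * (rho lam a + n))) =
      1 / (hookProd ℓ lam ^ 2 * oDim n lam) := by
  suffices h : lhsF n k lam = 1 / (hookProd ℓ lam ^ 2 * oDim n lam) by exact h
  rcases hnk with ⟨hkn, hlk⟩ | ⟨h1, h2, _⟩
  · have main : ∀ k', ℓ ≤ k' → k' < n → lhsF n k' lam = 1 / (hookProd ℓ lam ^ 2 * oDim n lam) := by
      intro k' hk'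
      induction k', hk' using Nat.le_induction with
      | base =>
        intro hn
        exact base ℓ n lam hmono hpos hzero (le_of_lt hn)
      | succ k' hk' ih =>
        intro hsucc
        rw [step ℓ n k' lam hzero hk' hsucc]
        exact ih (by omega)
    exact main k hlk hkn
  · subst h2
    subst h1
    exact base _ _ lam hmono hpos hzero (le_refl _)
end

section
/- Let λ be a partition and let n be an integer with n > ℓ(λ). Set ρ_i = λ_i − i (with λ_i = 0 for i > ℓ(λ)). Then 1 / ( H(λ)² · o_λ(2n) ) = 2 · ∏_{1 ≤ i < j ≤ n} (ρ_i − ρ_j)/(2n + ρ_i + ρ_j) · ∏_{i=1}^{n} (2n − 2i)! / ( 2·((ρ_i + n)!)² ). -/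
section helpers

lemma asc_prod (m k : ℕ) : ∏ i ∈ Finset.range k, (m + i) = m.ascFactorial k := by
  induction k with
  | zero => simp
  | succ k ih => rw [Finset.prod_range_succ, ih, Nat.ascFactorial_succ, Nat.mul_comm]

lemma rowNat (k : ℕ) (hk : 1 ≤ k) :
    2 * ∏ t ∈ Finset.range k, ((t + 1) * (2 * k - 1 - t)) = (2 * k).factorial := by
  rw [Finset.prod_mul_distrib, Finset.prod_range_add_one_eq_factorial]
  have h1 : ∏ t ∈ Finset.range k, (2 * k - 1 - t) = ∏ t ∈ Finset.range k, (k + t) := by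
    rw [← Finset.prod_range_reflect]
    apply Finset.prod_congr rfl
    intro t ht; simp only [Finset.mem_range] at ht; omega
  rw [h1, asc_prod]
  have h2 : (k - 1).factorial * k.ascFactorial k = (2 * k - 1).factorial := by
    have h := Nat.factorial_mul_ascFactorial (k - 1) k
    rw [Nat.sub_add_cancel hk] at h
    rw [h]; congr 1; omega
  have h3 : (2 * k).factorial = (2 * k) * (2 * k - 1).factorial := by
    have h4 : 2 * k = (2 * k - 1) + 1 := by omega
    rw [h4, Nat.factorial_succ]
    simp
  have h5 : k.factorial = k * (k - 1).factorial := by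
    have h4 : k = (k - 1) + 1 := by omega
    rw [h4, Nat.factorial_succ]
    simp
  rw [h5, h3, ← h2]; ring

lemma innerEq (n a : ℕ) (ha : a + 1 < n) :
    ∏ b ∈ Finset.Ioo a n, ((b - a) * (2 * n - 2 - a - b)) =
      ∏ t ∈ Finset.range (n - (a + 1)), ((t + 1) * (2 * (n - (a + 1)) - 1 - t)) := by
  rw [← Finset.Ico_add_one_left_eq_Ioo, Finset.prod_Ico_eq_prod_range]
  apply Finset.prod_congr rfl
  intro t ht; simp only [Finset.mem_range] at ht
  congr 1 <;> omega

lemma natD (n : ℕ) (hn : 1 ≤ n) :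
    2 ^ (n - 1) * ∏ a ∈ Finset.range n, ∏ b ∈ Finset.Ioo a n, ((b - a) * (2 * n - 2 - a - b)) =
      ∏ a ∈ Finset.range n, (2 * n - 2 * (a + 1)).factorial := by
  obtain ⟨m, rfl⟩ : ∃ m, n = m + 1 := ⟨n - 1, by omega⟩
  rw [Finset.prod_range_succ, Finset.prod_range_succ]
  have h1 : Finset.Ioo m (m + 1) = ∅ := by
    ext x; simp only [Finset.mem_Ioo, Finset.notMem_empty, iff_false]; omega
  have h2 : (2 * (m + 1) - 2 * (m + 1)).factorial = 1 := by
    simp [Nat.sub_self]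
  rw [h1, h2, Finset.prod_empty, mul_one, mul_one, Nat.add_sub_cancel,
    show (2:ℕ) ^ m = ∏ _x ∈ Finset.range m, 2 by simp, ← Finset.prod_mul_distrib]
  apply Finset.prod_congr rfl
  intro a ha; simp only [Finset.mem_range] at ha
  rw [innerEq (m + 1) a (by omega), rowNat (m + 1 - (a + 1)) (by omega)]
  congr 1; omega

lemma Dcast (n : ℕ) :
    ∏ a ∈ Finset.range n, ∏ b ∈ Finset.Ioo a n,
        (((b : ℚ) - a) * (2 * (n : ℚ) - (a + 1) - (b + 1))) =
      ((∏ a ∈ Finset.range n, ∏ b ∈ Finset.Ioo a n, ((b - a) * (2 * n - 2 - a - b)) : ℕ) : ℚ) := by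
  rw [Nat.cast_prod]
  apply Finset.prod_congr rfl
  intro a ha
  rw [Nat.cast_prod]
  apply Finset.prod_congr rfl
  intro b hb
  simp only [Finset.mem_range] at ha
  simp only [Finset.mem_Ioo] at hb
  rw [Nat.cast_mul, Nat.cast_sub hb.1.le, Nat.cast_sub (show b ≤ 2 * n - 2 - a by omega),
    Nat.cast_sub (show a ≤ 2 * n - 2 by omega), Nat.cast_sub (show 2 ≤ 2 * n by omega)]
  push_cast
  ring

lemma rowProd (n : ℕ) (lam : ℕ → ℕ) (hmono : ∀ ⦃i j : ℕ⦄, i ≤ j → lam j ≤ lam i)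
    (a : ℕ) (ha : a < n) :
    (∏ j ∈ Finset.Icc 1 (lam a),
        (lam a + ((Finset.range n).filter fun b => j ≤ lam b).card - j - a)) *
      (∏ b ∈ Finset.Ioo a n, (lam a + b - lam b - a)) = (lam a + n - 1 - a).factorial := by
  set N := lam a + n - 1 - a with hN
  set c : ℕ → ℕ := fun j => ((Finset.range n).filter fun b => j ≤ lam b).card with hc
  set cc : ℕ → ℕ := fun j => ((Finset.Ioo a n).filter fun b => j ≤ lam b).card with hcc
  have f1 : ∀ j, 1 ≤ j → j ≤ lam a → c j = (a + 1) + cc j := by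
    intro j hj1 hj2
    have hsplit : Finset.range n = Finset.range (a + 1) ∪ Finset.Ioo a n := by
      ext x; simp only [Finset.mem_range, Finset.mem_union, Finset.mem_Ioo]; omega
    have hdisj : Disjoint (Finset.range (a + 1)) (Finset.Ioo a n) := by
      rw [Finset.disjoint_left]
      intro x hx hx'
      simp only [Finset.mem_range] at hx
      simp only [Finset.mem_Ioo] at hx'
      omega
    rw [hc]
    beta_reduce
    rw [hsplit, Finset.filter_union,
      Finset.card_union_of_disjoint (Finset.disjoint_filter_filter hdisj),
      Finset.filter_true_of_mem (fun x hx => ?_)]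
    · simp [hcc]
    · simp only [Finset.mem_range] at hx
      exact le_trans hj2 (hmono (by omega))
  have f2 : ∀ j, cc j ≤ n - 1 - a := by
    intro j
    calc cc j ≤ (Finset.Ioo a n).card := Finset.card_filter_le _ _
    _ = n - 1 - a := by rw [Nat.card_Ioo]; omega
  have f3 : ∀ j j', j ≤ j' → cc j' ≤ cc j := by
    intro j j' hjj
    apply Finset.card_le_card
    intro x hx
    simp only [Finset.mem_filter] at hx ⊢
    exact ⟨hx.1, le_trans hjj hx.2⟩
  have f4 : ∀ j b, a < b → b < n → j ≤ lam b → b - a ≤ cc j := by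
    intro j b hab hbn hjb
    have hsub : Finset.Ioc a b ⊆ (Finset.Ioo a n).filter fun x => j ≤ lam x := by
      intro x hx
      simp only [Finset.mem_Ioc] at hx
      simp only [Finset.mem_filter, Finset.mem_Ioo]
      exact ⟨⟨hx.1, by omega⟩, le_trans hjb (hmono hx.2)⟩
    calc b - a = (Finset.Ioc a b).card := by rw [Nat.card_Ioc]
    _ ≤ _ := Finset.card_le_card hsub
  have f5 : ∀ j b, a < b → b < n → lam b < j → cc j ≤ b - 1 - a := by
    intro j b hab hbn hjb
    have hsub : ((Finset.Ioo a n).filter fun x => j ≤ lam x) ⊆ Finset.Ioo a b := by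
      intro x hx
      simp only [Finset.mem_filter, Finset.mem_Ioo] at hx
      simp only [Finset.mem_Ioo]
      refine ⟨hx.1.1, ?_⟩
      by_contra hcon
      exact absurd (le_trans hx.2 (hmono (not_lt.mp hcon))) (by omega)
    calc cc j ≤ (Finset.Ioo a b).card := Finset.card_le_card hsub
    _ = b - 1 - a := by rw [Nat.card_Ioo]; omega
  set h : ℕ → ℕ := fun j => lam a + c j - j - a with hh
  set d : ℕ → ℕ := fun b => lam a + b - lam b - a with hd
  have hio : ∀ j ∈ Finset.Icc 1 (lam a), ∀ j' ∈ Finset.Icc 1 (lam a), h j = h j' → j = j' := by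
    intro j hj j' hj' he
    simp only [Finset.mem_Icc] at hj hj'
    rcases lt_trichotomy j j' with hlt | heq | hlt
    · exfalso
      have e1 := f1 j hj.1 hj.2
      have e2 := f1 j' hj'.1 hj'.2
      have e3 := f3 j j' (le_of_lt hlt)
      simp only [hh] at he; omega
    · exact heq
    · exfalso
      have e1 := f1 j hj.1 hj.2
      have e2 := f1 j' hj'.1 hj'.2
      have e3 := f3 j' j (le_of_lt hlt)
      simp only [hh] at he; omega
  have dio : ∀ b ∈ Finset.Ioo a n, ∀ b' ∈ Finset.Ioo a n, d b = d b' → b = b' := by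
    intro b hb b' hb' he
    simp only [Finset.mem_Ioo] at hb hb'
    have l1 : lam b ≤ lam a := hmono (le_of_lt hb.1)
    have l2 : lam b' ≤ lam a := hmono (le_of_lt hb'.1)
    rcases lt_trichotomy b b' with hlt | heq | hlt
    · have := hmono (le_of_lt hlt); simp only [hd] at he; omega
    · exact heq
    · have := hmono (le_of_lt hlt); simp only [hd] at he; omega
  set S := (Finset.Icc 1 (lam a)).image h with hS
  set T := (Finset.Ioo a n).image d with hT
  have hdisjST : Disjoint S T := by
    rw [Finset.disjoint_left]
    intro x hx hx'
    simp only [hS, hT, Finset.mem_image, Finset.mem_Icc, Finset.mem_Ioo] at hx hx'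
    obtain ⟨j, ⟨hj1, hj2⟩, rfl⟩ := hx
    obtain ⟨b, ⟨hb1, hb2⟩, he⟩ := hx'
    have e1 := f1 j hj1 hj2
    have lb : lam b ≤ lam a := hmono (le_of_lt hb1)
    rcases le_or_gt j (lam b) with hcase | hcase
    · have := f4 j b hb1 hb2 hcase
      simp only [hh, hd] at he; omega
    · have := f5 j b hb1 hb2 hcase
      simp only [hh, hd] at he; omega
  have hsubIcc : S ∪ T ⊆ Finset.Icc 1 N := by
    intro x hx
    simp only [Finset.mem_union, hS, hT, Finset.mem_image, Finset.mem_Icc,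
      Finset.mem_Ioo] at hx ⊢
    rcases hx with ⟨j, ⟨hj1, hj2⟩, rfl⟩ | ⟨b, ⟨hb1, hb2⟩, rfl⟩
    · have e1 := f1 j hj1 hj2
      have e2 := f2 j
      simp only [hh]; omega
    · have lb : lam b ≤ lam a := hmono (le_of_lt hb1)
      simp only [hd]; omega
  have hcards : (S ∪ T).card = N := by
    rw [Finset.card_union_of_disjoint hdisjST, hS, hT,
      Finset.card_image_of_injOn hio, Finset.card_image_of_injOn dio,
      Nat.card_Icc, Nat.card_Ioo]
    omega
  have hST : S ∪ T = Finset.Icc 1 N := by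
    apply Finset.eq_of_subset_of_card_le hsubIcc
    rw [hcards, Nat.card_Icc]; omega
  calc (∏ j ∈ Finset.Icc 1 (lam a), h j) * (∏ b ∈ Finset.Ioo a n, d b)
      = (∏ x ∈ S, x) * (∏ x ∈ T, x) := by
        rw [hS, hT, Finset.prod_image hio, Finset.prod_image dio]
    _ = ∏ x ∈ S ∪ T, x := (Finset.prod_union hdisjST).symm
    _ = ∏ x ∈ Finset.Icc 1 N, x := by rw [hST]
    _ = N.factorial := by
        rw [← Finset.Ico_add_one_right_eq_Icc, Finset.prod_Ico_id_eq_factorial]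

end helpers


/-- For a partition `λ` and an integer `n > ℓ(λ)`, setting `ρ_i = λ_i − i`,
`1/(H(λ)²·o_λ(2n)) = 2 · ∏_{1≤i<j≤n} (ρ_i − ρ_j)/(2n + ρ_i + ρ_j)
  · ∏_{i=1}^n (2n−2i)! / (2·((ρ_i+n)!)²)`. -/
theorem dim_formula_n (ℓ : ℕ) (lam : ℕ → ℕ)
    (hmono : ∀ ⦃i j : ℕ⦄, i ≤ j → lam j ≤ lam i)
    (hpos : ∀ i, i < ℓ → 0 < lam i)
    (hzero : ∀ i, ℓ ≤ i → lam i = 0)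
    (n : ℕ) (hn : ℓ < n) :
    1 / (hookProd ℓ lam ^ 2 * oDim n lam) =
      2 * (∏ a ∈ Finset.range n, ∏ b ∈ Finset.Ioo a n,
        (rho lam a - rho lam b) / (2 * (n : ℚ) + rho lam a + rho lam b)) *
      (∏ a ∈ Finset.range n,
        ((2 * n - 2 * (a + 1)).factorial : ℚ) /
          (2 * ((lam a + n - (a + 1)).factorial : ℚ) ^ 2)) := by
  have hn1 : 1 ≤ n := by omega
  set P : ℚ := ∏ a ∈ Finset.range n, ∏ b ∈ Finset.Ioo a n, (rho lam a - rho lam b) with hPdef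
  set Q : ℚ := ∏ a ∈ Finset.range n, ∏ b ∈ Finset.Ioo a n,
    (2 * (n : ℚ) + rho lam a + rho lam b) with hQdef
  set D : ℚ := ∏ a ∈ Finset.range n, ∏ b ∈ Finset.Ioo a n,
    (((b : ℚ) - a) * (2 * (n : ℚ) - (a + 1) - (b + 1))) with hDdef
  set F : ℚ := ∏ a ∈ Finset.range n, ((lam a + n - (a + 1)).factorial : ℚ) with hFdef
  set G : ℚ := ∏ a ∈ Finset.range n, ((2 * n - 2 * (a + 1)).factorial : ℚ) with hGdef
  -- positivity
  have rho_sub_pos : ∀ a b : ℕ, a < b → 0 < rho lam a - rho lam b := by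
    intro a b hab
    have h1 : (lam b : ℚ) ≤ lam a := Nat.cast_le.mpr (hmono (le_of_lt hab))
    have h2 : (a : ℚ) + 1 ≤ b := by exact_mod_cast hab
    simp only [rho]; linarith
  have hcast3 : ∀ a b : ℕ, a < b → b < n → (a : ℚ) + b + 3 ≤ 2 * n := by
    intro a b hab hbn
    have : a + b + 3 ≤ 2 * n := by omega
    exact_mod_cast this
  have hPpos : 0 < P := by
    apply Finset.prod_pos; intro a ha; apply Finset.prod_pos; intro b hb
    simp only [Finset.mem_Ioo] at hb
    exact rho_sub_pos a b hb.1
  have hQpos : 0 < Q := by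
    apply Finset.prod_pos; intro a ha; apply Finset.prod_pos; intro b hb
    simp only [Finset.mem_Ioo] at hb
    have h1 : (0 : ℚ) ≤ lam a := Nat.cast_nonneg _
    have h2 : (0 : ℚ) ≤ lam b := Nat.cast_nonneg _
    have h3 := hcast3 a b hb.1 hb.2
    simp only [rho]; linarith
  have hDpos : 0 < D := by
    apply Finset.prod_pos; intro a ha; apply Finset.prod_pos; intro b hb
    simp only [Finset.mem_Ioo] at hb
    have h2 : (a : ℚ) + 1 ≤ b := by exact_mod_cast hb.1
    have h3 := hcast3 a b hb.1 hb.2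
    apply mul_pos <;> linarith
  have hFpos : 0 < F := by
    apply Finset.prod_pos; intro a ha
    exact_mod_cast Nat.factorial_pos _
  -- hook product identity
  have filter_eq : ∀ j, 1 ≤ j →
      ((Finset.range ℓ).filter fun b => j ≤ lam b) =
        ((Finset.range n).filter fun b => j ≤ lam b) := by
    intro j hj
    ext x
    simp only [Finset.mem_filter, Finset.mem_range]
    constructor
    · rintro ⟨h1, h2⟩; exact ⟨by omega, h2⟩
    · rintro ⟨h1, h2⟩
      refine ⟨?_, h2⟩
      by_contra hcon
      have := hzero x (by omega)
      omega
  have cardge : ∀ a, a < n → ∀ j, j ≤ lam a →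
      a + 1 ≤ ((Finset.range n).filter fun b => j ≤ lam b).card := by
    intro a ha j hj
    have hsub : Finset.range (a + 1) ⊆ (Finset.range n).filter fun b => j ≤ lam b := by
      intro x hx
      simp only [Finset.mem_range] at hx
      simp only [Finset.mem_filter, Finset.mem_range]
      exact ⟨by omega, le_trans hj (hmono (by omega))⟩
    calc a + 1 = (Finset.range (a + 1)).card := (Finset.card_range _).symm
    _ ≤ _ := Finset.card_le_card hsub
  have hA : hookProd ℓ lam = ∏ a ∈ Finset.range n,
      ((∏ j ∈ Finset.Icc 1 (lam a),
        (lam a + ((Finset.range n).filter fun b => j ≤ lam b).card - j - a) : ℕ) : ℚ) := by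
    unfold hookProd
    rw [Finset.prod_subset (Finset.range_subset_range.mpr (le_of_lt hn))
      (fun a _ hanot => ?_)]
    · apply Finset.prod_congr rfl
      intro a ha
      simp only [Finset.mem_range] at ha
      rw [Nat.cast_prod]
      apply Finset.prod_congr rfl
      intro j hj
      simp only [Finset.mem_Icc] at hj
      rw [filter_eq j hj.1]
      have h1 := cardge a (by omega) j hj.2
      rw [Nat.cast_sub (by omega), Nat.cast_sub (by omega), Nat.cast_add]
      ring
    · simp only [Finset.mem_range] at hanot
      have : lam a = 0 := hzero a (by omega)
      rw [this]
      simp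
  have hB : P = ∏ a ∈ Finset.range n,
      ((∏ b ∈ Finset.Ioo a n, (lam a + b - lam b - a) : ℕ) : ℚ) := by
    rw [hPdef]
    apply Finset.prod_congr rfl
    intro a ha
    rw [Nat.cast_prod]
    apply Finset.prod_congr rfl
    intro b hb
    simp only [Finset.mem_Ioo] at hb
    have l1 : lam b ≤ lam a := hmono (le_of_lt hb.1)
    simp only [rho]
    rw [Nat.cast_sub (by omega), Nat.cast_sub (by omega), Nat.cast_add]
    push_cast
    ring
  have hC : hookProd ℓ lam * P = F := by
    rw [hA, hB, ← Finset.prod_mul_distrib, hFdef]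
    apply Finset.prod_congr rfl
    intro a ha
    simp only [Finset.mem_range] at ha
    rw [← Nat.cast_mul, rowProd n lam hmono a ha]
    congr 2
    omega
  have hHP : hookProd ℓ lam = F / P := by
    rw [eq_div_iff (ne_of_gt hPpos)]
    exact hC
  -- oDim
  have hOif : lam (n - 1) = 0 := hzero _ (by omega)
  have hO : oDim n lam = P * Q / D := by
    have hnum : (∏ a ∈ Finset.range n, ∏ b ∈ Finset.Ioo a n,
        ((rho lam a - rho lam b) * (rho lam a + rho lam b + 2 * (n : ℚ)))) = P * Q := by
      simp only [Finset.prod_mul_distrib]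
      rw [hPdef, hQdef]
      congr 1
      apply Finset.prod_congr rfl
      intro a _
      apply Finset.prod_congr rfl
      intro b _
      ring
    unfold oDim
    rw [if_neg (by simp [hOif]), one_mul]
    simp only [Finset.prod_div_distrib]
    rw [hnum, ← hDdef]
  -- G and D relation
  have hGD : (2 : ℚ) ^ (n - 1) * D = G := by
    rw [hDdef, Dcast n, hGdef]
    have : G = ((∏ a ∈ Finset.range n, (2 * n - 2 * (a + 1)).factorial : ℕ) : ℚ) := by
      rw [hGdef, Nat.cast_prod]
    rw [hGdef] at this
    rw [this, ← natD n hn1]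
    push_cast
    ring
  -- final computation
  rw [hHP, hO]
  have hSp : (∏ a ∈ Finset.range n, ∏ b ∈ Finset.Ioo a n,
      (rho lam a - rho lam b) / (2 * (n : ℚ) + rho lam a + rho lam b)) = P / Q := by
    simp only [Finset.prod_div_distrib, hPdef, hQdef]
  have hTp : (∏ a ∈ Finset.range n,
      ((2 * n - 2 * (a + 1)).factorial : ℚ) /
        (2 * ((lam a + n - (a + 1)).factorial : ℚ) ^ 2)) = G / (2 ^ n * F ^ 2) := by
    simp only [Finset.prod_div_distrib, Finset.prod_mul_distrib, Finset.prod_pow,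
      Finset.prod_const, Finset.card_range, hGdef, hFdef]
  rw [hSp, hTp, ← hGD]
  have h2n : (2 : ℚ) ^ n = 2 ^ (n - 1) * 2 := by
    rw [← pow_succ]
    congr 1
    omega
  rw [h2n]
  field_simp
end

section
/- Let r ≥ 1 and k > r be integers, and let ρ_1 > ρ_2 > … > ρ_k be strictly decreasing integers such that ρ_{k−i} = i − k for all 0 ≤ i ≤ r − 1 (in particular ρ_k = −k, and consequently ρ_i ≥ −i for all i). Then for every integer n > k the following identity holds in ℚ: Σ_{i=1}^{k} (n + ρ_i) / ( (ρ_i + k + r)_{(r)} · (ρ_i + 2n − k + r − 1)_{(r)} ) · ∏_{j ≠ i} ( (ρ_i − ρ_j + r)/(ρ_i − ρ_j) ) · ( (ρ_i + ρ_j + 2n)/(ρ_i + ρ_j + 2n + r) ) = (1/2)·δ_{r,1}, where δ_{r,1} = 1 if r = 1 and 0 otherwise. (All denominators appearing are nonzero under these hypotheses.) -/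
open Polynomial Finset


/-- The falling factorial `(x)_{(r)} = x(x−1)⋯(x−r+1)`. -/
def fallingFactorial (x : ℚ) (r : ℕ) : ℚ := ∏ j ∈ Finset.range r, (x - j)

lemma lagrange_sum_eq_coeff {F : Type*} [Field F] {ι : Type*} [DecidableEq ι]
    (s : Finset ι) (v : ι → F) (hvs : Set.InjOn v s) (f : F[X])
    (hf : f.degree < s.card) :
    ∑ i ∈ s, f.eval (v i) / ∏ j ∈ s.erase i, (v i - v j) = f.coeff (s.card - 1) := by
  conv_rhs => rw [Lagrange.eq_interpolate hvs hf]
  rw [Lagrange.interpolate_apply, Polynomial.finset_sum_coeff]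
  refine Finset.sum_congr rfl fun i hi => ?_
  rw [Polynomial.coeff_C_mul]
  have h1 : (Lagrange.basis s v i).coeff (s.card - 1)
      = (∏ j ∈ s.erase i, (v i - v j))⁻¹ := by
    have hd := Lagrange.natDegree_basis hvs hi
    rw [← hd, ← Polynomial.leadingCoeff, Lagrange.basis, Polynomial.leadingCoeff_prod,
      ← Finset.prod_inv_distrib]
    refine Finset.prod_congr rfl fun j hj => ?_
    rw [Lagrange.basisDivisor, Polynomial.leadingCoeff_mul, Polynomial.leadingCoeff_C,
      (Polynomial.monic_X_sub_C _).leadingCoeff, mul_one]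
  rw [h1, div_eq_mul_inv]

/-- For integers `r ≥ 1`, `k > r`, strictly decreasing integers `ρ_1 > … > ρ_k` with
`ρ_{k−i} = i − k` for `0 ≤ i ≤ r−1`, and any integer `n > k`:
`Σ_{i=1}^k (n+ρ_i)/((ρ_i+k+r)_{(r)}·(ρ_i+2n−k+r−1)_{(r)})
  · ∏_{j≠i} ((ρ_i−ρ_j+r)/(ρ_i−ρ_j))·((ρ_i+ρ_j+2n)/(ρ_i+ρ_j+2n+r)) = (1/2)·δ_{r,1}`. -/
theorem rational_sum_identity (r k n : ℕ) (hr : 1 ≤ r) (hrk : r < k) (hkn : k < n)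
    (ρ : ℕ → ℤ)
    (hdec : ∀ i j : ℕ, 1 ≤ i → i < j → j ≤ k → ρ j < ρ i)
    (htail : ∀ i : ℕ, i < r → ρ (k - i) = (i : ℤ) - k) :
    ∑ i ∈ Finset.Icc 1 k,
      (((n : ℚ) + (ρ i : ℚ)) /
          (fallingFactorial ((ρ i : ℚ) + k + r) r *
            fallingFactorial ((ρ i : ℚ) + 2 * n - k + r - 1) r)) *
        ∏ j ∈ (Finset.Icc 1 k).erase i,
          (((ρ i : ℚ) - (ρ j : ℚ) + r) / ((ρ i : ℚ) - (ρ j : ℚ))) *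
            (((ρ i : ℚ) + (ρ j : ℚ) + 2 * n) / ((ρ i : ℚ) + (ρ j : ℚ) + 2 * n + r)) =
      (1 / 2) * (if r = 1 then 1 else 0) := by
  classical
  set K : Finset ℕ := Finset.Icc 1 k with hK
  set p : ℕ → ℚ := fun i => ((ρ i : ℚ)) with hp
  set v : ℕ → ℚ := fun j => if j ≤ k then p j else -p (j - k) - 2*n - r with hv
  set s : Finset ℕ := Finset.Icc 1 (2*k) with hs
  set f : ℚ[X] := (X + C ((n:ℚ) + r/2)) *
      ∏ j ∈ Finset.Icc 1 (k - r), ((X + C ((r:ℚ) - p j)) * (X + C (p j + 2*(n:ℚ)))) with hf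
  have hk1 : 1 ≤ k := hr.trans hrk.le
  have hcard : s.card = 2*k := by rw [hs, Nat.card_Icc]; omega
  -- lower bound on ρ
  have hρk : ρ k = -(k:ℤ) := by have := htail 0 (by omega); simpa using this
  have hlow : ∀ i ∈ K, -(k:ℤ) ≤ ρ i := by
    intro i hi
    rw [hK, Finset.mem_Icc] at hi
    rcases eq_or_lt_of_le hi.2 with h | h
    · rw [h, hρk]
    · exact le_of_lt (hρk ▸ hdec i k hi.1 h le_rfl)
  have hlowQ : ∀ i ∈ K, -(k:ℚ) ≤ p i := by
    intro i hi
    have h := hlow i hi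
    show -(k:ℚ) ≤ ((ρ i : ℤ) : ℚ)
    exact_mod_cast h
  have hposnr : ∀ i ∈ K, ∀ j ∈ K, 0 < p i + p j + 2*n := by
    intro i hi j hj
    have h1 := hlowQ i hi; have h2 := hlowQ j hj
    have : (k:ℚ) < n := by exact_mod_cast hkn
    linarith
  have hposr : ∀ i ∈ K, ∀ j ∈ K, 0 < p i + p j + 2*n + r := by
    intro i hi j hj
    have := hposnr i hi j hj
    have : (0:ℚ) ≤ r := by positivity
    linarith
  have hpn : ∀ i ∈ K, 0 < p i + n := by
    intro i hi
    have h1 := hlowQ i hi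
    have : (k:ℚ) < n := by exact_mod_cast hkn
    linarith
  have hne : ∀ i ∈ K, ∀ j ∈ K, i ≠ j → p i ≠ p j := by
    intro i hi j hj hij
    rw [hK, Finset.mem_Icc] at hi hj
    intro hc
    have hc2 : ((ρ i : ℤ) : ℚ) = ((ρ j : ℤ) : ℚ) := hc
    have hc3 : ρ i = ρ j := by exact_mod_cast hc2
    rcases lt_or_gt_of_ne hij with h | h
    · have := hdec i j hi.1 h hj.2; omega
    · have := hdec j i hj.1 h hi.2; omega
  have hvK : ∀ i ∈ K, v i = p i := by
    intro i hi; rw [hK, Finset.mem_Icc] at hi; simp [hv, hi.2]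
  have hvK2 : ∀ i ∈ K, v (i+k) = -p i - 2*n - r := by
    intro i hi; rw [hK, Finset.mem_Icc] at hi
    have : ¬ (i + k ≤ k) := by omega
    simp [hv, this]
  have hmem : ∀ c : ℕ, 1 ≤ c → c ≤ k → c ∈ K := fun c h1 h2 => by
    rw [hK, Finset.mem_Icc]; exact ⟨h1, h2⟩
  have hinj : Set.InjOn v s := by
    intro a ha b hb hab
    simp only [hs, Finset.coe_Icc, Set.mem_Icc] at ha hb
    by_cases hak : a ≤ k <;> by_cases hbk : b ≤ k
    · have h1 : v a = p a := by simp [hv, hak]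
      have h2 : v b = p b := by simp [hv, hbk]
      by_contra hne2
      exact hne a (hmem a ha.1 hak) b (hmem b hb.1 hbk) hne2 (by rw [← h1, ← h2, hab])
    · have h1 : v a = p a := by simp [hv, hak]
      have h2 : v b = -p (b-k) - 2*n - r := by simp [hv, hbk]
      have h3 := hposr a (hmem a ha.1 hak) (b-k) (hmem (b-k) (by omega) (by omega))
      rw [h1, h2] at hab; linarith
    · have h1 : v b = p b := by simp [hv, hbk]
      have h2 : v a = -p (a-k) - 2*n - r := by simp [hv, hak]
      have h3 := hposr b (hmem b hb.1 hbk) (a-k) (hmem (a-k) (by omega) (by omega))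
      rw [h1, h2] at hab; linarith
    · have h1 : v a = -p (a-k) - 2*n - r := by simp [hv, hak]
      have h2 : v b = -p (b-k) - 2*n - r := by simp [hv, hbk]
      rw [h1, h2] at hab
      have h3 : p (a-k) = p (b-k) := by linarith
      by_contra hne2
      exact hne (a-k) (hmem (a-k) (by omega) (by omega)) (b-k)
        (hmem (b-k) (by omega) (by omega)) (by omega) h3
  have hmonic : f.Monic := by
    refine (monic_X_add_C _).mul (monic_prod_of_monic _ _ fun j _ => ?_)
    exact (monic_X_add_C _).mul (monic_X_add_C _)
  have hfnat : f.natDegree = 2*(k-r)+1 := by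
    rw [hf]
    rw [Polynomial.natDegree_mul (Polynomial.X_add_C_ne_zero _)
      (by
        refine Finset.prod_ne_zero_iff.mpr fun j _ => ?_
        exact mul_ne_zero (Polynomial.X_add_C_ne_zero _) (Polynomial.X_add_C_ne_zero _))]
    rw [Polynomial.natDegree_X_add_C]
    rw [Polynomial.natDegree_prod _ _ (fun j _ =>
      mul_ne_zero (Polynomial.X_add_C_ne_zero _) (Polynomial.X_add_C_ne_zero _))]
    have : ∀ j ∈ Finset.Icc 1 (k-r),
        ((X + C ((r:ℚ) - p j)) * (X + C (p j + 2*(n:ℚ)))).natDegree = 2 := by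
      intro j _
      rw [Polynomial.natDegree_mul (Polynomial.X_add_C_ne_zero _)
        (Polynomial.X_add_C_ne_zero _), Polynomial.natDegree_X_add_C,
        Polynomial.natDegree_X_add_C]
    rw [Finset.sum_congr rfl this, Finset.sum_const, Nat.card_Icc, smul_eq_mul]
    omega
  have hfd : f.degree < s.card := by
    rw [Polynomial.degree_eq_natDegree hmonic.ne_zero, hfnat, hcard]
    exact_mod_cast (by omega : 2*(k-r)+1 < 2*k)
  have hfc : f.coeff (s.card - 1) = if r = 1 then 1 else 0 := by
    rw [hcard]
    by_cases h1 : r = 1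
    · subst h1
      have : 2*k - 1 = f.natDegree := by rw [hfnat]; omega
      rw [this, ← Polynomial.leadingCoeff, hmonic.leadingCoeff, if_pos rfl]
    · rw [if_neg h1]
      exact Polynomial.coeff_eq_zero_of_natDegree_lt (by rw [hfnat]; omega)
  have heval : ∀ x : ℚ, f.eval (-x - 2*n - r) = - f.eval x := by
    intro x
    simp only [hf, eval_mul, eval_add, eval_X, eval_C, eval_prod]
    have : ∀ j ∈ Finset.Icc 1 (k - r),
        (-x - 2*n - r + ((r:ℚ) - p j)) * (-x - 2*n - r + (p j + 2*(n:ℚ)))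
          = (x + ((r:ℚ) - p j)) * (x + (p j + 2*(n:ℚ))) := by
      intro j _; ring
    rw [Finset.prod_congr rfl this]
    ring
  have hpair : ∀ i ∈ K,
      f.eval (v (i+k)) / ∏ j ∈ s.erase (i+k), (v (i+k) - v j)
        = f.eval (v i) / ∏ j ∈ s.erase i, (v i - v j) := by
    intro i hi
    have hik : i ∈ Finset.Icc 1 k := by rwa [hK] at hi
    rw [Finset.mem_Icc] at hik
    have hv1 : v i = p i := hvK i hi
    have hv2 : v (i+k) = -p i - 2*n - r := hvK2 i hi
    have hnum : f.eval (v (i+k)) = - f.eval (v i) := by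
      rw [hv2, hv1]; exact heval (p i)
    have hden : ∏ j ∈ s.erase (i+k), (v (i+k) - v j)
        = - ∏ j ∈ s.erase i, (v i - v j) := by
      have h1 : ∏ j ∈ s.erase (i+k), (v (i+k) - v j)
          = ∏ j ∈ s.erase i, (v j - v i) := by
        refine Finset.prod_nbij' (fun j => if j ≤ k then j + k else j - k)
          (fun j => if j ≤ k then j + k else j - k) ?_ ?_ ?_ ?_ ?_
        · intro a ha
          simp only [Finset.mem_erase, hs, Finset.mem_Icc] at ha ⊢
          by_cases h : a ≤ k <;> simp only [h, if_pos, if_neg, not_false_iff] <;> omega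
        · intro a ha
          simp only [Finset.mem_erase, hs, Finset.mem_Icc] at ha ⊢
          by_cases h : a ≤ k <;> simp only [h, if_pos, if_neg, not_false_iff] <;> omega
        · intro a ha
          simp only [Finset.mem_erase, hs, Finset.mem_Icc] at ha
          by_cases h : a ≤ k
          · have h2 : ¬ (a + k ≤ k) := by omega
            simp only [h, if_pos, h2, if_neg, not_false_iff]; omega
          · have h2 : a - k ≤ k := by omega
            simp only [h, if_neg, not_false_iff, h2, if_pos]; omega
        · intro a ha
          simp only [Finset.mem_erase, hs, Finset.mem_Icc] at ha
          by_cases h : a ≤ k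
          · have h2 : ¬ (a + k ≤ k) := by omega
            simp only [h, if_pos, h2, if_neg, not_false_iff]; omega
          · have h2 : a - k ≤ k := by omega
            simp only [h, if_neg, not_false_iff, h2, if_pos]; omega
        · intro a ha
          simp only [Finset.mem_erase, hs, Finset.mem_Icc] at ha
          by_cases h : a ≤ k
          · simp only [h, if_pos]
            have ha1 : a ∈ K := hmem a ha.2.1 h
            have e1 : v a = p a := hvK a ha1
            have e2 : v (a+k) = -p a - 2*n - r := hvK2 a ha1
            rw [hv2, e1, e2, hv1]; ring
          · simp only [h, if_neg, not_false_iff]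
            have ha1 : a - k ∈ K := hmem (a-k) (by omega) (by omega)
            have e1 : v (a-k) = p (a-k) := hvK (a-k) ha1
            have e2 : v a = -p (a-k) - 2*n - r := by
              have : v ((a-k)+k) = -p (a-k) - 2*n - r := hvK2 (a-k) ha1
              rwa [show a-k+k = a by omega] at this
            rw [hv2, e1, e2, hv1]; ring
      rw [h1]
      have h2 : ∀ j ∈ s.erase i, v j - v i = (-1) * (v i - v j) := by
        intro j _; ring
      rw [Finset.prod_congr rfl h2, Finset.prod_mul_distrib, Finset.prod_const]
      have hcard2 : (s.erase i).card = 2*k - 1 := by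
        rw [Finset.card_erase_of_mem (by simp only [hs, Finset.mem_Icc]; omega), hcard]
      rw [hcard2]
      have : (-1 : ℚ)^(2*k-1) = -1 := Odd.neg_one_pow ⟨k-1, by omega⟩
      rw [this]; ring
    rw [hnum, hden, neg_div_neg_eq]
  have hmain : ∀ i ∈ K,
      (((n : ℚ) + (ρ i : ℚ)) /
          (fallingFactorial ((ρ i : ℚ) + k + r) r *
            fallingFactorial ((ρ i : ℚ) + 2 * n - k + r - 1) r)) *
        ∏ j ∈ (Finset.Icc 1 k).erase i,
          (((ρ i : ℚ) - (ρ j : ℚ) + r) / ((ρ i : ℚ) - (ρ j : ℚ))) *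
            (((ρ i : ℚ) + (ρ j : ℚ) + 2 * n) / ((ρ i : ℚ) + (ρ j : ℚ) + 2 * n + r))
      = (1/(r:ℚ)) * (f.eval (v i) / ∏ j ∈ s.erase i, (v i - v j)) := by
    intro i hi
    have hik : 1 ≤ i ∧ i ≤ k := by rw [hK, Finset.mem_Icc] at hi; exact hi
    have hv1 : v i = p i := hvK i hi
    have hcast : ∀ j : ℕ, ((ρ j : ℤ) : ℚ) = p j := fun _ => rfl
    have hpk : ∀ m : ℕ, m < r → p (k - m) = (m:ℚ) - k := by
      intro m hm
      have h := htail m hm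
      show ((ρ (k-m) : ℤ) : ℚ) = (m:ℚ) - k
      rw [h]; push_cast; ring
    have hA : fallingFactorial (p i + k + r) r
        = ∏ j ∈ Finset.Icc (k-r+1) k, (p i - p j + r) := by
      simp only [fallingFactorial]
      refine Finset.prod_nbij' (fun m => k - m) (fun j => k - j) ?_ ?_ ?_ ?_ ?_
      · intro m hm; simp only [Finset.mem_range] at hm; simp only [Finset.mem_Icc]; omega
      · intro j hj; simp only [Finset.mem_Icc] at hj; simp only [Finset.mem_range]; omega
      · intro m hm; simp only [Finset.mem_range] at hm; omega
      · intro j hj; simp only [Finset.mem_Icc] at hj; omega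
      · intro m hm; simp only [Finset.mem_range] at hm
        rw [hpk m hm]; ring
    have hB : fallingFactorial (p i + 2 * n - k + r - 1) r
        = ∏ j ∈ Finset.Icc (k-r+1) k, (p i + p j + 2*n) := by
      simp only [fallingFactorial]
      have hrefl : ∏ m ∈ Finset.range r, (p i + 2 * (n:ℚ) - k + r - 1 - m)
          = ∏ m ∈ Finset.range r, (p i + 2 * (n:ℚ) - k + m) := by
        rw [← Finset.prod_range_reflect (fun t => p i + 2 * (n:ℚ) - k + t) r]
        refine Finset.prod_congr rfl fun m hm => ?_
        simp only [Finset.mem_range] at hm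
        have hc : ((r - 1 - m : ℕ) : ℚ) = (r:ℚ) - 1 - m := by
          have h1 : r - 1 - m = r - (1 + m) := by omega
          rw [h1, Nat.cast_sub (by omega)]; push_cast; ring
        show p i + 2 * (n:ℚ) - k + r - 1 - m = p i + 2 * (n:ℚ) - k + ((r - 1 - m : ℕ) : ℚ)
        rw [hc]; ring
      rw [hrefl]
      refine Finset.prod_nbij' (fun m => k - m) (fun j => k - j) ?_ ?_ ?_ ?_ ?_
      · intro m hm; simp only [Finset.mem_range] at hm; simp only [Finset.mem_Icc]; omega
      · intro j hj; simp only [Finset.mem_Icc] at hj; simp only [Finset.mem_range]; omega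
      · intro m hm; simp only [Finset.mem_range] at hm; omega
      · intro j hj; simp only [Finset.mem_Icc] at hj; omega
      · intro m hm; simp only [Finset.mem_range] at hm
        rw [hpk m hm]; ring
    have hsplitK : ∏ j ∈ K, ((p i - p j + (r:ℚ)) * (p i + p j + 2*n))
        = (∏ j ∈ Finset.Icc 1 (k-r), ((p i - p j + (r:ℚ)) * (p i + p j + 2*n)))
          * ∏ j ∈ Finset.Icc (k-r+1) k, ((p i - p j + (r:ℚ)) * (p i + p j + 2*n)) := by
      have h1 : K = Finset.Ioc 0 k := by rw [hK, ← Finset.Icc_add_one_left_eq_Ioc]; rfl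
      have h2 : Finset.Icc 1 (k-r) = Finset.Ioc 0 (k-r) := by rw [← Finset.Icc_add_one_left_eq_Ioc]; rfl
      have h3 : Finset.Icc (k-r+1) k = Finset.Ioc (k-r) k := by rw [← Finset.Icc_add_one_left_eq_Ioc]
      rw [Finset.prod_congr h1 (fun _ _ => rfl), Finset.prod_congr h2 (fun _ _ => rfl),
        Finset.prod_congr h3 (fun _ _ => rfl),
        Finset.prod_Ioc_consecutive _ (Nat.zero_le (k-r)) (by omega : k - r ≤ k)]
    have hfull : ∏ j ∈ K, ((p i - p j + (r:ℚ)) * (p i + p j + 2*n))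
        = ((p i - p i + (r:ℚ)) * (p i + p i + 2*n))
          * ∏ j ∈ K.erase i, ((p i - p j + (r:ℚ)) * (p i + p j + 2*n)) :=
      (Finset.mul_prod_erase K _ hi).symm
    have hsErase : s.erase i = (K.erase i) ∪ Finset.Ioc k (2*k) := by
      ext a
      simp only [Finset.mem_erase, Finset.mem_union, hs, hK, Finset.mem_Icc, Finset.mem_Ioc]
      omega
    have hdisj : Disjoint (K.erase i) (Finset.Ioc k (2*k)) := by
      rw [Finset.disjoint_left]
      intro a ha ha2
      simp only [Finset.mem_erase, hK, Finset.mem_Icc] at ha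
      simp only [Finset.mem_Ioc] at ha2
      omega
    have hD : ∏ j ∈ s.erase i, (v i - v j)
        = (∏ j ∈ K.erase i, (p i - p j)) * ∏ j ∈ K, (p i + p j + 2*n + r) := by
      rw [hsErase, Finset.prod_union hdisj]
      congr 1
      · refine Finset.prod_congr rfl fun j hj => ?_
        rw [hv1, hvK j (Finset.mem_of_mem_erase hj)]
      · refine Finset.prod_nbij' (fun j => j - k) (fun j => j + k) ?_ ?_ ?_ ?_ ?_
        · intro a ha; simp only [Finset.mem_Ioc] at ha; simp only [hK, Finset.mem_Icc]; omega
        · intro a ha; simp only [hK, Finset.mem_Icc] at ha; simp only [Finset.mem_Ioc]; omega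
        · intro a ha; simp only [Finset.mem_Ioc] at ha; omega
        · intro a ha; simp only [hK, Finset.mem_Icc] at ha; omega
        · intro a ha; simp only [Finset.mem_Ioc] at ha
          have haK : a - k ∈ K := hmem (a-k) (by omega) (by omega)
          have hva : v a = -p (a-k) - 2*n - r := by
            have h := hvK2 (a-k) haK
            rwa [show a-k+k = a by omega] at h
          rw [hv1, hva]; ring
    have hev : f.eval (v i) = (p i + n + (r:ℚ)/2)
        * ∏ j ∈ Finset.Icc 1 (k-r), ((p i - p j + (r:ℚ)) * (p i + p j + 2*n)) := by
      rw [hv1]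
      simp only [hf, eval_mul, eval_add, eval_X, eval_C, eval_prod]
      congr 1
      · ring
      · refine Finset.prod_congr rfl fun j _ => ?_
        ring
    -- nonvanishing
    have hbb0 : (∏ j ∈ Finset.Icc (k-r+1) k, ((p i - p j + (r:ℚ)) * (p i + p j + 2*n))) ≠ 0 := by
      refine Finset.prod_ne_zero_iff.mpr fun j hj => ?_
      simp only [Finset.mem_Icc] at hj
      have hjK : j ∈ K := hmem j (by omega) hj.2
      have h1 := hpk (k - j) (by omega)
      rw [show k - (k - j) = j by omega] at h1
      apply mul_ne_zero
      · have hc : ((k - j:ℕ):ℚ) < r := by exact_mod_cast (show k - j < r by omega)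
        have hlo := hlowQ i hi
        have : 0 < p i - p j + (r:ℚ) := by rw [h1]; linarith
        exact ne_of_gt this
      · exact ne_of_gt (hposnr i hi j hjK)
    have hd10 : (∏ j ∈ K.erase i, (p i - p j)) ≠ 0 := by
      refine Finset.prod_ne_zero_iff.mpr fun j hj => ?_
      have hj2 := Finset.mem_erase.mp hj
      exact sub_ne_zero.mpr (hne i hi j hj2.2 (Ne.symm hj2.1))
    have hd2e0 : (∏ j ∈ K.erase i, (p i + p j + 2*n + (r:ℚ))) ≠ 0 := by
      refine Finset.prod_ne_zero_iff.mpr fun j hj => ?_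
      exact ne_of_gt (hposr i hi j (Finset.mem_of_mem_erase hj))
    have hd2 : ∏ j ∈ K, (p i + p j + 2*n + (r:ℚ))
        = (p i + p i + 2*n + (r:ℚ)) * ∏ j ∈ K.erase i, (p i + p j + 2*n + (r:ℚ)) :=
      (Finset.mul_prod_erase K _ hi).symm
    have hr0 : (r:ℚ) ≠ 0 := Nat.cast_ne_zero.mpr (by omega)
    have hcc0 : ((p i - p i + (r:ℚ)) * (p i + p i + 2*n)) ≠ 0 := by
      apply mul_ne_zero
      · simpa using hr0
      · exact ne_of_gt (hposnr i hi i hi)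
    -- now rewrite goal
    simp only [hcast]
    rw [← hK, hA, hB, hev, hD, hd2]
    have hterm : ∀ j ∈ K.erase i,
        ((p i - p j + (r:ℚ)) / (p i - p j)) * ((p i + p j + 2*n) / (p i + p j + 2*n + r))
        = ((p i - p j + (r:ℚ)) * (p i + p j + 2*n))
            / ((p i - p j) * (p i + p j + 2*n + (r:ℚ))) := by
      intro j _
      rw [div_mul_div_comm]
    rw [Finset.prod_congr rfl hterm, Finset.prod_div_distrib]
    have hN : (∏ j ∈ Finset.Icc 1 (k-r), ((p i - p j + (r:ℚ)) * (p i + p j + 2*n)))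
        * ∏ j ∈ Finset.Icc (k-r+1) k, ((p i - p j + (r:ℚ)) * (p i + p j + 2*n))
        = ((p i - p i + (r:ℚ)) * (p i + p i + 2*n))
          * ∏ j ∈ K.erase i, ((p i - p j + (r:ℚ)) * (p i + p j + 2*n)) :=
      hsplitK.symm.trans hfull
    have hNe : ∏ j ∈ K.erase i, ((p i - p j + (r:ℚ)) * (p i + p j + 2*n))
        = ((∏ j ∈ Finset.Icc 1 (k-r), ((p i - p j + (r:ℚ)) * (p i + p j + 2*n)))
            * ∏ j ∈ Finset.Icc (k-r+1) k, ((p i - p j + (r:ℚ)) * (p i + p j + 2*n)))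
          / ((p i - p i + (r:ℚ)) * (p i + p i + 2*n)) := by
      rw [eq_div_iff hcc0, mul_comm] at *
      linarith [hN]
    simp only [Finset.prod_mul_distrib] at hNe ⊢
    rw [hNe]
    have hbb0' := hbb0
    rw [Finset.prod_mul_distrib] at hbb0'
    have ht1 : (∏ j ∈ Finset.Icc (k-r+1) k, (p i - p j + (r:ℚ))) ≠ 0 :=
      (mul_ne_zero_iff.mp hbb0').1
    have ht2 : (∏ j ∈ Finset.Icc (k-r+1) k, (p i + p j + 2*(n:ℚ))) ≠ 0 :=
      (mul_ne_zero_iff.mp hbb0').2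
    have hpn2 : (p i + p i + 2*(n:ℚ)) ≠ 0 := ne_of_gt (hposnr i hi i hi)
    have hpr2 : (p i + p i + 2*(n:ℚ) + r) ≠ 0 := ne_of_gt (hposr i hi i hi)
    field_simp
    rw [div_eq_div_iff (mul_ne_zero (mul_ne_zero (mul_ne_zero (by ring_nf at ht2 ⊢; rwa [Finset.prod_congr rfl fun x _ => (by ring : p i + p x + (n:ℚ) * 2 = p i + (n:ℚ) * 2 + p x)] at ht2) (by ring_nf; exact hr0)) (by ring_nf at hpn2 ⊢; exact hpn2)) (by ring_nf at hd2e0 ⊢; rwa [Finset.prod_congr rfl fun x _ => (by ring : p i + p x + (n:ℚ) * 2 + r = p i + (n:ℚ) * 2 + r + p x)] at hd2e0)) (mul_ne_zero (by ring_nf at hd2e0 ⊢; rwa [Finset.prod_congr rfl fun x _ => (by ring : p i + p x + (n:ℚ) * 2 + r = p i + (n:ℚ) * 2 + r + p x)] at hd2e0) (by ring_nf at hpr2 ⊢; exact hpr2))]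
    ring
  -- assemble
  have hlag := lagrange_sum_eq_coeff s v hinj f hfd
  have hsplit : ∑ i ∈ s, f.eval (v i) / ∏ j ∈ s.erase i, (v i - v j)
      = 2 * ∑ i ∈ K, f.eval (v i) / ∏ j ∈ s.erase i, (v i - v j) := by
    have h0 : s = Finset.Ioc 0 (2*k) := by rw [hs, ← Finset.Icc_add_one_left_eq_Ioc]; rfl
    have hKI : K = Finset.Ioc 0 k := by rw [hK, ← Finset.Icc_add_one_left_eq_Ioc]; rfl
    have hsum := Finset.sum_Ioc_consecutive
      (f := fun i => f.eval (v i) / ∏ j ∈ s.erase i, (v i - v j))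
      (Nat.zero_le k) (by omega : k ≤ 2*k)
    have e1 : ∑ i ∈ s, f.eval (v i) / ∏ j ∈ s.erase i, (v i - v j)
        = (∑ i ∈ K, f.eval (v i) / ∏ j ∈ s.erase i, (v i - v j))
          + ∑ i ∈ Finset.Ioc k (2*k), f.eval (v i) / ∏ j ∈ s.erase i, (v i - v j) := by
      rw [Finset.sum_congr h0 (fun _ _ => rfl), ← hsum,
        Finset.sum_congr hKI (fun _ _ => rfl)]
    rw [e1]
    have h2 : ∑ i ∈ Finset.Ioc k (2*k), f.eval (v i) / ∏ j ∈ s.erase i, (v i - v j)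
        = ∑ i ∈ K, f.eval (v (i+k)) / ∏ j ∈ s.erase (i+k), (v (i+k) - v j) := by
      refine Finset.sum_nbij' (fun i => i - k) (fun i => i + k) ?_ ?_ ?_ ?_ ?_
      · intro a ha; simp only [Finset.mem_Ioc] at ha; simp only [hK, Finset.mem_Icc]; omega
      · intro a ha; simp only [hK, Finset.mem_Icc] at ha; simp only [Finset.mem_Ioc]; omega
      · intro a ha; simp only [Finset.mem_Ioc] at ha; omega
      · intro a ha; simp only [hK, Finset.mem_Icc] at ha; omega
      · intro a ha; simp only [Finset.mem_Ioc] at ha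
        rw [show a - k + k = a by omega]
    rw [h2]
    rw [Finset.sum_congr rfl (fun i hi => hpair i hi)]
    ring
  rw [Finset.sum_congr rfl (fun i hi => hmain i hi), ← Finset.mul_sum]
  have hr0 : (r:ℚ) ≠ 0 := Nat.cast_ne_zero.mpr (by omega)
  have hKsum : ∑ i ∈ K, f.eval (v i) / ∏ j ∈ s.erase i, (v i - v j)
      = (1/2) * (if r = 1 then 1 else 0) := by
    rw [hsplit] at hlag
    rw [hfc] at hlag
    linarith [hlag]
  rw [hKsum]
  by_cases h1 : r = 1
  · subst h1; simp
  · simp [h1]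
end
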